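/- arXiv:q-alg/9712023 — 6 statements merged into one kernel-verified Lean document; each statement's English description precedes it below -/
import Mathlib

section
/- Let C be a coalgebra, A an algebra and a right C-comodule with coaction Δ_A, and B := {b ∈ A : ∀ a ∈ A, Δ_A(ba) = b·Δ_A(a)} (i.e. Δ_A(ba) = b a₍₀₎ ⊗ a₍₁₎). Suppose there exists a convolution invertible right C-comodule map Φ : C → A such that for every a ∈ A, a₍₀₎ Φ⁻¹(a₍₁₎) ∈ B. Then the canonical map can : A ⊗_B A → A ⊗ C, a ⊗ a' ↦ a a'₍₀₎ ⊗ a'₍₁₎ is bijective, with inverse a ⊗ c ↦ a Φ⁻¹(c₍₁₎) ⊗_B Φ(c₍₂₎). -/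
open TensorProduct LinearMap

/-- An entwining structure `(A, C)_ψ`. -/
structure Entwining (k A C : Type) [Field k] [Ring A] [Algebra k A]
    [AddCommGroup C] [Module k C] [Coalgebra k C] where
  ψ : C ⊗[k] A →ₗ[k] A ⊗[k] C
  entw_mul : ψ ∘ₗ (mul' k A).lTensor C =
    (mul' k A).rTensor C ∘ₗ (TensorProduct.assoc k A A C).symm.toLinearMap ∘ₗ
      ψ.lTensor A ∘ₗ (TensorProduct.assoc k A C A).toLinearMap ∘ₗ
      ψ.rTensor A ∘ₗ (TensorProduct.assoc k C A A).symm.toLinearMap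
  entw_unit : ∀ c : C, ψ (c ⊗ₜ[k] 1) = 1 ⊗ₜ[k] c
  entw_comul : (Coalgebra.comul (R := k) (A := C)).lTensor A ∘ₗ ψ =
    (TensorProduct.assoc k A C C).toLinearMap ∘ₗ ψ.rTensor C ∘ₗ
      (TensorProduct.assoc k C A C).symm.toLinearMap ∘ₗ ψ.lTensor C ∘ₗ
      (TensorProduct.assoc k C C A).toLinearMap ∘ₗ
      (Coalgebra.comul (R := k) (A := C)).rTensor A
  entw_counit : (TensorProduct.rid k A).toLinearMap ∘ₗ
      (Coalgebra.counit (R := k) (A := C)).lTensor A ∘ₗ ψ =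
    (TensorProduct.lid k A).toLinearMap ∘ₗ (Coalgebra.counit (R := k) (A := C)).rTensor A

/-- A right `C`-comodule structure on `V`. -/
structure RComod (k C V : Type) [Field k] [AddCommGroup C] [Module k C] [Coalgebra k C]
    [AddCommGroup V] [Module k V] where
  ρ : V →ₗ[k] V ⊗[k] C
  coassoc : (Coalgebra.comul (R := k) (A := C)).lTensor V ∘ₗ ρ =
    (TensorProduct.assoc k V C C).toLinearMap ∘ₗ ρ.rTensor C ∘ₗ ρ
  counit_id : (TensorProduct.rid k V).toLinearMap ∘ₗ
      (Coalgebra.counit (R := k) (A := C)).lTensor V ∘ₗ ρ = LinearMap.id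

/-- A left `C`-comodule structure on `V`. -/
structure LComod (k C V : Type) [Field k] [AddCommGroup C] [Module k C] [Coalgebra k C]
    [AddCommGroup V] [Module k V] where
  ρ : V →ₗ[k] C ⊗[k] V
  coassoc : (Coalgebra.comul (R := k) (A := C)).rTensor V ∘ₗ ρ =
    (TensorProduct.assoc k C C V).symm.toLinearMap ∘ₗ ρ.lTensor C ∘ₗ ρ
  counit_id : (TensorProduct.lid k V).toLinearMap ∘ₗ
      (Coalgebra.counit (R := k) (A := C)).rTensor V ∘ₗ ρ = LinearMap.id

/-- A right `A`-module structure (`k`-linear) on `M`. -/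
structure RAct (k A M : Type) [Field k] [Ring A] [Algebra k A]
    [AddCommGroup M] [Module k M] where
  act : M ⊗[k] A →ₗ[k] M
  act_one : ∀ m : M, act (m ⊗ₜ[k] 1) = m
  act_mul : ∀ (m : M) (a b : A),
    act (act (m ⊗ₜ[k] a) ⊗ₜ[k] b) = act (m ⊗ₜ[k] (a * b))

variable {k A C M : Type} [Field k] [Ring A] [Algebra k A]
  [AddCommGroup C] [Module k C] [Coalgebra k C] [AddCommGroup M] [Module k M]

/-- The compatibility condition making `M` an entwined `(A,C)_ψ`-module. -/
def EntwCompat (E : Entwining k A C) (α : RAct k A M) (ρM : RComod k C M) : Prop :=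
  ρM.ρ ∘ₗ α.act = α.act.rTensor C ∘ₗ (TensorProduct.assoc k M A C).symm.toLinearMap ∘ₗ
    E.ψ.lTensor M ∘ₗ (TensorProduct.assoc k M C A).toLinearMap ∘ₗ ρM.ρ.rTensor A

/-- The `A`-action on `M ⊗ C` induced by an entwining: `(m⊗c)·a = m·a_α ⊗ c^α`. -/
noncomputable def entwAct (E : Entwining k A C) (ν : M ⊗[k] A →ₗ[k] M) :
    (M ⊗[k] C) ⊗[k] A →ₗ[k] M ⊗[k] C :=
  ν.rTensor C ∘ₗ (TensorProduct.assoc k M A C).symm.toLinearMap ∘ₗ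
    E.ψ.lTensor M ∘ₗ (TensorProduct.assoc k M C A).toLinearMap

/-- The `C`-coaction `M ⊗ Δ` on `M ⊗ C`. -/
noncomputable def coactMC (k C M : Type) [Field k] [AddCommGroup C] [Module k C]
    [Coalgebra k C] [AddCommGroup M] [Module k M] :
    M ⊗[k] C →ₗ[k] (M ⊗[k] C) ⊗[k] C :=
  (TensorProduct.assoc k M C C).symm.toLinearMap ∘ₗ
    (Coalgebra.comul (R := k) (A := C)).lTensor M

/-- The coaction on `V ⊗ A` induced by an entwining: `v⊗a ↦ v₍₀₎ ⊗ ψ(v₍₁₎⊗a)`. -/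
noncomputable def entwCoact {V : Type} [AddCommGroup V] [Module k V]
    (E : Entwining k A C) (ρV : V →ₗ[k] V ⊗[k] C) :
    V ⊗[k] A →ₗ[k] (V ⊗[k] A) ⊗[k] C :=
  (TensorProduct.assoc k V A C).symm.toLinearMap ∘ₗ E.ψ.lTensor V ∘ₗ
    (TensorProduct.assoc k V C A).toLinearMap ∘ₗ ρV.rTensor A

/-- The action `V ⊗ μ` on `V ⊗ A`. -/
noncomputable def actVA (k : Type) (A V : Type) [Field k] [Ring A] [Algebra k A]
    [AddCommGroup V] [Module k V] :
    (V ⊗[k] A) ⊗[k] A →ₗ[k] V ⊗[k] A :=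
  (mul' k A).lTensor V ∘ₗ (TensorProduct.assoc k V A A).toLinearMap

/-- The canonical map `A ⊗ₖ A → A ⊗ C`, `a ⊗ a' ↦ a a'₍₀₎ ⊗ a'₍₁₎`. -/
noncomputable def canHat (ΔA : A →ₗ[k] A ⊗[k] C) : A ⊗[k] A →ₗ[k] A ⊗[k] C :=
  (mul' k A).rTensor C ∘ₗ (TensorProduct.assoc k A A C).symm.toLinearMap ∘ₗ ΔA.lTensor A

/-- The subspace of relations defining `A ⊗_B A` inside `A ⊗ₖ A`. -/
noncomputable def relSub (k : Type) [Field k] {A : Type} [Ring A] [Algebra k A]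
    (B : Set A) : Submodule k (A ⊗[k] A) :=
  Submodule.span k {x | ∃ a a' b : A, b ∈ B ∧ x = (a * b) ⊗ₜ[k] a' - a ⊗ₜ[k] (b * a')}

/-- Convolution product of `f g : C → A`. -/
noncomputable def conv (f g : C →ₗ[k] A) : C →ₗ[k] A :=
  mul' k A ∘ₗ TensorProduct.map f g ∘ₗ Coalgebra.comul (R := k)

/-- The convolution unit `η ∘ ε`. -/
noncomputable def convUnit (k C A : Type) [Field k] [Ring A] [Algebra k A]
    [AddCommGroup C] [Module k C] [Coalgebra k C] : C →ₗ[k] A :=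
  Algebra.linearMap k A ∘ₗ Coalgebra.counit (R := k)

variable (k) in
/-- The subalgebra-defining set `B = {b ∈ A : ∀ a, Δ_A(ba) = bΔ_A(a)}`. -/
noncomputable def coinvB (ΔA : A →ₗ[k] A ⊗[k] C) : Set A :=
  {b | ∀ a : A, ΔA (b * a) = (LinearMap.mulLeft k b).rTensor C (ΔA a)}

/-- `A` as a right module over itself. -/
noncomputable def mulRAct (k A : Type) [Field k] [Ring A] [Algebra k A] : RAct k A A where
  act := mul' k A
  act_one := fun m => by simp [LinearMap.mul'_apply]
  act_mul := fun m a b => by simp [LinearMap.mul'_apply, mul_assoc]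

/-!
The inverse is `a ⊗ c ↦ a • τ c` with the translation map `τ c = Φ⁻¹(c₍₁₎) ⊗ Φ(c₍₂₎)`; both it
and `can` are left `A`-linear. Since `Φ` is colinear and `Φ⁻¹ ∗ Φ = ε`,
`can (τ c) = Φ⁻¹(c₍₁₎)Φ(c₍₂₎) ⊗ c₍₃₎ = 1 ⊗ c`, so `can` is split surjective.
Conversely, coassociativity of `Δ_A` turns `a a'₍₀₎Φ⁻¹(a'₍₁₎) ⊗ Φ(a'₍₂₎)` into
`a p(a'₍₀₎) ⊗ Φ(a'₍₁₎)` with `p x = x₍₀₎Φ⁻¹(x₍₁₎) ∈ B`, and moving `p(a'₍₀₎)` across `⊗_B` gives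
`a ⊗ a'₍₀₎Φ⁻¹(a'₍₁₎)Φ(a'₍₂₎) = a ⊗ a'`. So the inverse undoes `can` modulo the relations of `⊗_B`,
which in turn lie in the kernel of `can` by the defining property of `B`.
-/

section LeftExtend

variable {R S V W : Type*} [CommSemiring R] [Semiring S] [Algebra R S]
  [AddCommMonoid V] [Module R V] [AddCommMonoid W] [Module R W]

theorem rTensor_mul'_assoc_symm_tmul (s : S) (t : S ⊗[R] V) :
    (mul' R S).rTensor V ((TensorProduct.assoc R S S V).symm (s ⊗ₜ t)) = s • t := by
  induction t using TensorProduct.induction_on with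
  | zero => simp
  | tmul x v => simp [smul_tmul', mul'_apply]
  | add x y hx hy => simp only [tmul_add, map_add, hx, hy, smul_add]

def leftExtend (f : W →ₗ[R] S ⊗[R] V) : S ⊗[R] W →ₗ[R] S ⊗[R] V :=
  (mul' R S).rTensor V ∘ₗ (TensorProduct.assoc R S S V).symm.toLinearMap ∘ₗ f.lTensor S

variable (f : W →ₗ[R] S ⊗[R] V)

@[simp]
theorem leftExtend_tmul (s : S) (w : W) : leftExtend f (s ⊗ₜ w) = s • f w :=
  rTensor_mul'_assoc_symm_tmul s (f w)

theorem leftExtend_smul (s : S) (t : S ⊗[R] W) :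
    leftExtend f (s • t) = s • leftExtend f t := by
  induction t using TensorProduct.induction_on with
  | zero => simp
  | tmul x w => simp [smul_tmul', mul_smul]
  | add x y hx hy => simp only [smul_add, map_add, hx, hy]

theorem leftExtend_comp {U : Type*} [AddCommMonoid U] [Module R U] (g : U →ₗ[R] W) :
    leftExtend (f ∘ₗ g) = leftExtend f ∘ₗ g.lTensor S := by
  rw [leftExtend, leftExtend, lTensor_comp]
  rfl

end LeftExtend

section CanonicalMap

variable {k A C : Type} [Field k] [Ring A] [Algebra k A] [AddCommGroup C] [Module k C]

theorem mem_coinvB_iff {ρ : A →ₗ[k] A ⊗[k] C} {b : A} :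
    b ∈ coinvB k ρ ↔ ∀ a, ρ (b * a) = b • ρ a :=
  Iff.rfl

theorem canHat_eq_leftExtend (ρ : A →ₗ[k] A ⊗[k] C) : canHat ρ = leftExtend ρ := rfl

theorem relSub_le_ker_canHat (ρ : A →ₗ[k] A ⊗[k] C) :
    relSub k (coinvB k ρ) ≤ ker (canHat ρ) := by
  refine Submodule.span_le.mpr ?_
  rintro _ ⟨a, a', b, hb, rfl⟩
  simp [canHat_eq_leftExtend, mem_coinvB_iff.mp hb a', mul_smul]

theorem smul_map_sub_tmul_mul'_mem_relSub {V W : Type*} [AddCommGroup V] [Module k V]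
    [AddCommGroup W] [Module k W] {B : Set A} {f : V →ₗ[k] A} (hf : ∀ v, f v ∈ B)
    (g : W →ₗ[k] A) (a : A) (t : V ⊗[k] W) :
    a • map f g t - a ⊗ₜ mul' k A (map f g t) ∈ relSub k B := by
  induction t using TensorProduct.induction_on with
  | zero => simp
  | tmul v w =>
    refine Submodule.subset_span ⟨a, g w, f v, hf v, ?_⟩
    simp [smul_tmul', mul'_apply]
  | add x y hx hy =>
    convert Submodule.add_mem _ hx hy using 1
    simp only [map_add, smul_add, tmul_add]
    abel

noncomputable def coinvProj (ρ : A →ₗ[k] A ⊗[k] C) (Φinv : C →ₗ[k] A) : A →ₗ[k] A :=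
  mul' k A ∘ₗ Φinv.lTensor A ∘ₗ ρ

theorem map_coinvProj (ρ : A →ₗ[k] A ⊗[k] C) (Φinv Φ : C →ₗ[k] A) :
    map (coinvProj ρ Φinv) Φ = map (mul' k A ∘ₗ Φinv.lTensor A) Φ ∘ₗ ρ.rTensor C := by
  rw [map_comp_rTensor, coinvProj, comp_assoc]

variable [Coalgebra k C]

noncomputable def translationMap (Φinv Φ : C →ₗ[k] A) : C →ₗ[k] A ⊗[k] A :=
  map Φinv Φ ∘ₗ Coalgebra.comul

theorem mul'_lTensor_convUnit (t : A ⊗[k] C) :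
    mul' k A ((convUnit k C A).lTensor A t) =
      TensorProduct.rid k A (Coalgebra.counit.lTensor A t) := by
  induction t using TensorProduct.induction_on with
  | zero => simp
  | tmul x c => simp [convUnit, mul'_apply, Algebra.smul_def, Algebra.commutes]
  | add x y hx hy => simp only [map_add, hx, hy]

theorem leftExtend_translationMap_coaction (ΔA : RComod k C A) (Φinv Φ : C →ₗ[k] A) (a : A) :
    leftExtend (translationMap Φinv Φ) (ΔA.ρ a) =
      map (coinvProj ΔA.ρ Φinv) Φ (ΔA.ρ a) := by
  have hassoc : leftExtend (map Φinv Φ) ∘ₗ (TensorProduct.assoc k A C C).toLinearMap =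
      map (mul' k A ∘ₗ Φinv.lTensor A) Φ :=
    ext_threefold fun x c d => by simp [smul_tmul', mul'_apply]
  rw [translationMap, leftExtend_comp, map_coinvProj, ← hassoc]
  exact congr(leftExtend (map Φinv Φ) $(LinearMap.congr_fun ΔA.coassoc a))

theorem mul'_map_coinvProj_coaction (ΔA : RComod k C A) {Φinv Φ : C →ₗ[k] A}
    (hconv : conv Φinv Φ = convUnit k C A) (a : A) :
    mul' k A (map (coinvProj ΔA.ρ Φinv) Φ (ΔA.ρ a)) = a := by
  have hassoc : mul' k A ∘ₗ map (mul' k A ∘ₗ Φinv.lTensor A) Φ ∘ₗ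
      (TensorProduct.assoc k A C C).symm.toLinearMap =
      mul' k A ∘ₗ (mul' k A ∘ₗ map Φinv Φ).lTensor A :=
    ext_threefold' fun x c d => by simp [mul'_apply, mul_assoc]
  have hco : ΔA.ρ.rTensor C (ΔA.ρ a) =
      (TensorProduct.assoc k A C C).symm (Coalgebra.comul.lTensor A (ΔA.ρ a)) := by
    rw [LinearEquiv.eq_symm_apply]
    exact (LinearMap.congr_fun ΔA.coassoc a).symm
  calc mul' k A (map (coinvProj ΔA.ρ Φinv) Φ (ΔA.ρ a))
      = mul' k A ((mul' k A ∘ₗ map Φinv Φ).lTensor A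
          (Coalgebra.comul.lTensor A (ΔA.ρ a))) := by
        rw [map_coinvProj, comp_apply, hco]
        exact LinearMap.congr_fun hassoc _
    _ = mul' k A ((convUnit k C A).lTensor A (ΔA.ρ a)) := by
        rw [← lTensor_comp_apply, comp_assoc, ← hconv, conv]
    _ = a := by
        rw [mul'_lTensor_convUnit]
        exact LinearMap.congr_fun ΔA.counit_id a

theorem canHat_translationMap (ρ : A →ₗ[k] A ⊗[k] C) {Φinv Φ : C →ₗ[k] A}
    (hcolin : ρ ∘ₗ Φ = Φ.rTensor C ∘ₗ Coalgebra.comul)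
    (hconv : conv Φinv Φ = convUnit k C A) (c : C) :
    canHat ρ (translationMap Φinv Φ c) = 1 ⊗ₜ c := by
  have hassoc : leftExtend (Φ.rTensor C) ∘ₗ Φinv.rTensor (C ⊗[k] C) =
      (mul' k A ∘ₗ map Φinv Φ).rTensor C ∘ₗ
        (TensorProduct.assoc k C C C).symm.toLinearMap :=
    ext_threefold' fun x c d => by simp [smul_tmul', mul'_apply]
  have hcan : canHat ρ ∘ₗ map Φinv Φ =
      (mul' k A ∘ₗ map Φinv Φ).rTensor C ∘ₗ
        (TensorProduct.assoc k C C C).symm.toLinearMap ∘ₗ Coalgebra.comul.lTensor C := by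
    conv_lhs => rw [← lTensor_comp_rTensor]
    rw [canHat_eq_leftExtend, ← comp_assoc, ← leftExtend_comp, hcolin,
      leftExtend_comp, comp_assoc, lTensor_comp_rTensor, ← rTensor_comp_lTensor, ← comp_assoc,
      hassoc, comp_assoc]
  calc canHat ρ (translationMap Φinv Φ c)
      = (mul' k A ∘ₗ map Φinv Φ).rTensor C
          ((TensorProduct.assoc k C C C).symm (Coalgebra.comul.lTensor C (Coalgebra.comul c))) :=
        LinearMap.congr_fun hcan (Coalgebra.comul c)
    _ = (conv Φinv Φ).rTensor C (Coalgebra.comul c) := by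
        rw [Coalgebra.coassoc_symm_apply, conv, ← comp_assoc]
        exact (rTensor_comp_apply ..).symm
    _ = 1 ⊗ₜ c := by
        rw [hconv, convUnit, rTensor_comp_apply, Coalgebra.rTensor_counit_comul]
        simp

theorem canHat_comp_leftExtend_translationMap (ρ : A →ₗ[k] A ⊗[k] C) {Φinv Φ : C →ₗ[k] A}
    (hcolin : ρ ∘ₗ Φ = Φ.rTensor C ∘ₗ Coalgebra.comul)
    (hconv : conv Φinv Φ = convUnit k C A) :
    canHat ρ ∘ₗ leftExtend (translationMap Φinv Φ) = LinearMap.id :=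
  TensorProduct.ext' fun a c => by
    rw [comp_apply, leftExtend_tmul, canHat_eq_leftExtend, leftExtend_smul,
      ← canHat_eq_leftExtend, canHat_translationMap ρ hcolin hconv, smul_tmul', smul_eq_mul,
      mul_one, id_apply]

theorem leftExtend_translationMap_canHat_sub_mem_relSub (ΔA : RComod k C A)
    {Φinv Φ : C →ₗ[k] A} (hconv : conv Φinv Φ = convUnit k C A)
    (hB : ∀ a, coinvProj ΔA.ρ Φinv a ∈ coinvB k ΔA.ρ) (x : A ⊗[k] A) :
    leftExtend (translationMap Φinv Φ) (canHat ΔA.ρ x) - x ∈ relSub k (coinvB k ΔA.ρ) := by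
  induction x using TensorProduct.induction_on with
  | zero => simp
  | tmul a a' =>
    rw [canHat_eq_leftExtend, leftExtend_tmul, leftExtend_smul, leftExtend_translationMap_coaction]
    have h := smul_map_sub_tmul_mul'_mem_relSub hB Φ a (ΔA.ρ a')
    rwa [mul'_map_coinvProj_coaction ΔA hconv a'] at h
  | add x y hx hy =>
    convert Submodule.add_mem _ hx hy using 1
    rw [map_add, map_add]
    abel

end CanonicalMap

theorem statement4_general {k A C : Type} [Field k] [Ring A] [Algebra k A]
    [AddCommGroup C] [Module k C] [Coalgebra k C]
    (ΔA : RComod k C A) (Φ Φinv : C →ₗ[k] A)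
    (hconv2 : conv Φinv Φ = convUnit k C A)
    (hcolin : ΔA.ρ ∘ₗ Φ = Φ.rTensor C ∘ₗ Coalgebra.comul (R := k))
    (hB : ∀ a : A, mul' k A (Φinv.lTensor A (ΔA.ρ a)) ∈ coinvB k ΔA.ρ) :
    Function.Surjective (canHat ΔA.ρ) ∧
    LinearMap.ker (canHat ΔA.ρ) = relSub k (coinvB k ΔA.ρ) ∧
    (canHat ΔA.ρ ∘ₗ
        ((mul' k A).rTensor A ∘ₗ (TensorProduct.assoc k A A A).symm.toLinearMap ∘ₗ
          (TensorProduct.map Φinv Φ).lTensor A ∘ₗ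
          (Coalgebra.comul (R := k) (A := C)).lTensor A) = LinearMap.id) ∧
    (∀ x : A ⊗[k] A,
      ((mul' k A).rTensor A ∘ₗ (TensorProduct.assoc k A A A).symm.toLinearMap ∘ₗ
          (TensorProduct.map Φinv Φ).lTensor A ∘ₗ
          (Coalgebra.comul (R := k) (A := C)).lTensor A) (canHat ΔA.ρ x) - x ∈
        relSub k (coinvB k ΔA.ρ)) := by
  have hinv : (mul' k A).rTensor A ∘ₗ (TensorProduct.assoc k A A A).symm.toLinearMap ∘ₗ
      (TensorProduct.map Φinv Φ).lTensor A ∘ₗ (Coalgebra.comul (R := k) (A := C)).lTensor A =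
      leftExtend (translationMap Φinv Φ) := by
    rw [translationMap, leftExtend_comp]
    rfl
  have hright := canHat_comp_leftExtend_translationMap ΔA.ρ hcolin hconv2
  have hleft := leftExtend_translationMap_canHat_sub_mem_relSub ΔA hconv2 hB
  rw [hinv]
  refine ⟨fun t => ⟨_, LinearMap.congr_fun hright t⟩,
    le_antisymm (fun x hx => ?_) (relSub_le_ker_canHat _), hright, hleft⟩
  simpa [mem_ker.mp hx] using neg_mem (hleft x)

/-- if there is a convolution invertible right `C`-comodule map `Φ : C → A`
with `a₍₀₎Φ⁻¹(a₍₁₎) ∈ B` for all `a`, then the canonical map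
`can : A ⊗_B A → A ⊗ C` is bijective with inverse `a ⊗ c ↦ aΦ⁻¹(c₍₁₎) ⊗_B Φ(c₍₂₎)`.
Here `A ⊗_B A` is encoded as `(A ⊗ₖ A)/relSub`, so bijectivity of `can` reads:
`canHat` is surjective with kernel `relSub`, and the stated inverse is a two-sided
inverse modulo the relations. -/
theorem statement4 {k A C : Type} [Field k] [Ring A] [Algebra k A]
    [AddCommGroup C] [Module k C] [Coalgebra k C]
    (ΔA : RComod k C A) (Φ Φinv : C →ₗ[k] A)
    (hconv1 : conv Φ Φinv = convUnit k C A) (hconv2 : conv Φinv Φ = convUnit k C A)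
    (hcolin : ΔA.ρ ∘ₗ Φ = Φ.rTensor C ∘ₗ Coalgebra.comul (R := k))
    (hB : ∀ a : A, mul' k A (Φinv.lTensor A (ΔA.ρ a)) ∈ coinvB k ΔA.ρ) :
    Function.Surjective (canHat ΔA.ρ) ∧
    LinearMap.ker (canHat ΔA.ρ) = relSub k (coinvB k ΔA.ρ) ∧
    (canHat ΔA.ρ ∘ₗ
        ((mul' k A).rTensor A ∘ₗ (TensorProduct.assoc k A A A).symm.toLinearMap ∘ₗ
          (TensorProduct.map Φinv Φ).lTensor A ∘ₗ
          (Coalgebra.comul (R := k) (A := C)).lTensor A) = LinearMap.id) ∧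
    (∀ x : A ⊗[k] A,
      ((mul' k A).rTensor A ∘ₗ (TensorProduct.assoc k A A A).symm.toLinearMap ∘ₗ
          (TensorProduct.map Φinv Φ).lTensor A ∘ₗ
          (Coalgebra.comul (R := k) (A := C)).lTensor A) (canHat ΔA.ρ x) - x ∈
        relSub k (coinvB k ΔA.ρ)) :=
  statement4_general ΔA Φ Φinv hconv2 hcolin hB
end

section
/- Let C be a coalgebra, A an algebra and right C-comodule, and suppose (A,C)_ψ is an entwining structure with A a right (A,C)_ψ-module via its product and coaction. If Φ : C → A is a convolution invertible right C-comodule map, then for all c ∈ C: ψ(c₍₁₎ ⊗ Φ⁻¹(c₍₂₎)) = Φ⁻¹(c) · Δ_A(1), i.e. ψ(c₍₁₎ ⊗ Φ⁻¹(c₍₂₎)) = Φ⁻¹(c)1₍₀₎ ⊗ 1₍₁₎. -/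
open TensorProduct LinearMap

variable {k A C M : Type} [Field k] [Ring A] [Algebra k A]
  [AddCommGroup C] [Module k C] [Coalgebra k C] [AddCommGroup M] [Module k M]

/-!
For a left `A`-module `M`, let `f ⋆ h := c ↦ f(c₍₁₎) • h(c₍₂₎)` be the convolution action of
`Hom(C, A)` on `Hom(C, M)`; it is unital and associative over the convolution product. Since `A`
is an entwined module and `Φ` is colinear, `Δ_A(Φ(c₍₁₎) g(c₍₂₎)) = Φ(c₍₁₎) ψ(c₍₂₎ ⊗ g(c₍₃₎))`,
that is `Δ_A ∘ (Φ * g) = Φ ⋆ G_g` with `G_g(c) = ψ(c₍₁₎ ⊗ g(c₍₂₎))`. For `g = Φ⁻¹` this reads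
`Φ ⋆ G_{Φ⁻¹} = Δ_A ∘ ηε`, and acting by `Φ⁻¹` gives `G_{Φ⁻¹} = Φ⁻¹ ⋆ (Δ_A ∘ ηε)`, whose value at
`c` is `Φ⁻¹(c) Δ_A(1)`.
-/

theorem rTensor_mulLeft_apply {R A N : Type*} [CommSemiring R] [Semiring A] [Algebra R A]
    [AddCommMonoid N] [Module R N] (a : A) (t : A ⊗[R] N) :
    (LinearMap.mulLeft R a).rTensor N t = a • t := by
  rw [TensorProduct.AlgebraTensorModule.smul_eq_lsmul_rTensor]
  rfl

theorem rTensor_mul'_assoc_symm_tmul_s5 {R A N : Type*} [CommSemiring R] [Semiring A]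
    [Algebra R A] [AddCommMonoid N] [Module R N] (a : A) (t : A ⊗[R] N) :
    (mul' R A).rTensor N ((TensorProduct.assoc R A A N).symm (a ⊗ₜ t)) = a • t := by
  induction t using TensorProduct.induction_on with
  | zero => simp
  | tmul u v => simp [TensorProduct.smul_tmul']
  | add x y hx hy => simp [tmul_add, hx, hy]

section ConvolutionAction

variable [Module A M] [IsScalarTower k A M]

variable (k A M) in
noncomputable def tensorSMul : A ⊗[k] M →ₗ[k] M :=
  TensorProduct.lift (Algebra.lsmul k k M).toLinearMap

@[simp]
theorem tensorSMul_tmul (a : A) (m : M) : tensorSMul k A M (a ⊗ₜ m) = a • m := rfl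

noncomputable def convSMul (f : C →ₗ[k] A) (h : C →ₗ[k] M) : C →ₗ[k] M :=
  tensorSMul k A M ∘ₗ TensorProduct.map f h ∘ₗ Coalgebra.comul (R := k)

theorem convUnit_convSMul (h : C →ₗ[k] M) : convSMul (convUnit k C A) h = h := by
  have hcounit : tensorSMul k A M ∘ₗ TensorProduct.map (convUnit k C A) h =
      h ∘ₗ (TensorProduct.lid k C).toLinearMap ∘ₗ (Coalgebra.counit (R := k)).rTensor C := by
    apply TensorProduct.ext'
    intro x y
    simp [convUnit, Algebra.algebraMap_eq_smul_one]
  ext c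
  rw [convSMul, ← LinearMap.comp_assoc, hcounit]
  simp

theorem conv_convSMul (f g : C →ₗ[k] A) (h : C →ₗ[k] M) :
    convSMul (conv f g) h = convSMul f (convSMul g h) := by
  have hassoc : tensorSMul k A M ∘ₗ TensorProduct.map (mul' k A ∘ₗ TensorProduct.map f g) h =
      tensorSMul k A M ∘ₗ TensorProduct.map f (tensorSMul k A M ∘ₗ TensorProduct.map g h) ∘ₗ
        (TensorProduct.assoc k C C C).toLinearMap := by
    apply TensorProduct.ext_threefold
    intro x y z
    simp [mul_smul]
  calc convSMul (conv f g) h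
      = tensorSMul k A M ∘ₗ TensorProduct.map (mul' k A ∘ₗ TensorProduct.map f g) h ∘ₗ
          (Coalgebra.comul (R := k)).rTensor C ∘ₗ Coalgebra.comul (R := k) := by
        ext c
        simp only [convSMul, conv, LinearMap.comp_apply, LinearMap.map_rTensor]
        rfl
    _ = tensorSMul k A M ∘ₗ TensorProduct.map f (tensorSMul k A M ∘ₗ TensorProduct.map g h) ∘ₗ
          (Coalgebra.comul (R := k)).lTensor C ∘ₗ Coalgebra.comul (R := k) := by
        rw [← Coalgebra.coassoc, ← LinearMap.comp_assoc, hassoc]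
        simp only [LinearMap.comp_assoc]
    _ = convSMul f (convSMul g h) := by
        ext c
        simp only [convSMul, LinearMap.comp_apply, LinearMap.map_lTensor]
        rfl

theorem convSMul_comp_convUnit_apply (f : C →ₗ[k] A) (g : A →ₗ[k] M) (c : C) :
    convSMul f (g ∘ₗ convUnit k C A) c = f c • g 1 := by
  have hcounit : tensorSMul k A M ∘ₗ TensorProduct.map f (g ∘ₗ convUnit k C A) =
      LinearMap.smulRight f (g 1) ∘ₗ (TensorProduct.rid k C).toLinearMap ∘ₗ
        (Coalgebra.counit (R := k)).lTensor C := by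
    apply TensorProduct.ext'
    intro x y
    simp [convUnit, Algebra.algebraMap_eq_smul_one]
  rw [convSMul, ← LinearMap.comp_assoc, LinearMap.comp_apply, hcounit]
  simp

end ConvolutionAction

theorem EntwCompat.coaction_comp_conv {E : Entwining k A C} {ΔA : RComod k C A}
    (hA : EntwCompat E (mulRAct k A) ΔA) {Φ : C →ₗ[k] A}
    (hΦ : ΔA.ρ ∘ₗ Φ = Φ.rTensor C ∘ₗ Coalgebra.comul (R := k)) (g : C →ₗ[k] A) :
    ΔA.ρ ∘ₗ conv Φ g = convSMul Φ (E.ψ ∘ₗ g.lTensor C ∘ₗ Coalgebra.comul (R := k)) := by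
  have htmul : entwAct E (mul' k A) ∘ₗ TensorProduct.map (Φ.rTensor C) g =
      tensorSMul k A (A ⊗[k] C) ∘ₗ TensorProduct.map Φ (E.ψ ∘ₗ g.lTensor C) ∘ₗ
        (TensorProduct.assoc k C C C).toLinearMap := by
    apply TensorProduct.ext_threefold
    intro x y z
    simp [entwAct, rTensor_mul'_assoc_symm_tmul_s5]
  ext c
  calc (ΔA.ρ ∘ₗ conv Φ g) c
      = entwAct E (mul' k A) (ΔA.ρ.rTensor A (TensorProduct.map Φ g (Coalgebra.comul c))) :=
        congr($hA (TensorProduct.map Φ g (Coalgebra.comul c)))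
    _ = entwAct E (mul' k A) (TensorProduct.map (Φ.rTensor C) g
          ((Coalgebra.comul (R := k)).rTensor C (Coalgebra.comul c))) := by
        rw [LinearMap.rTensor_map, hΦ, LinearMap.map_rTensor]
    _ = convSMul Φ (E.ψ ∘ₗ g.lTensor C ∘ₗ Coalgebra.comul (R := k)) c := by
        rw [← LinearMap.comp_apply (entwAct E _), htmul]
        simp only [convSMul, LinearMap.comp_apply, LinearEquiv.coe_coe, Coalgebra.coassoc_apply,
          LinearMap.map_lTensor]
        rfl

/-- if `(A,C)_ψ` is an entwining structure with `A` a right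
`(A,C)_ψ`-module via its product and coaction, and `Φ : C → A` is a convolution
invertible right `C`-comodule map, then `ψ(c₍₁₎ ⊗ Φ⁻¹(c₍₂₎)) = Φ⁻¹(c)1₍₀₎ ⊗ 1₍₁₎`. -/
theorem statement5 {k A C : Type} [Field k] [Ring A] [Algebra k A]
    [AddCommGroup C] [Module k C] [Coalgebra k C]
    (E : Entwining k A C) (ΔA : RComod k C A)
    (hAmod : EntwCompat E (mulRAct k A) ΔA)
    (Φ Φinv : C →ₗ[k] A)
    (hconv1 : conv Φ Φinv = convUnit k C A) (hconv2 : conv Φinv Φ = convUnit k C A)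
    (hcolin : ΔA.ρ ∘ₗ Φ = Φ.rTensor C ∘ₗ Coalgebra.comul (R := k)) :
    ∀ c : C, E.ψ (Φinv.lTensor C (Coalgebra.comul (R := k) c)) =
      (LinearMap.mulLeft k (Φinv c)).rTensor C (ΔA.ρ 1) := by
  have hψ : E.ψ ∘ₗ Φinv.lTensor C ∘ₗ Coalgebra.comul (R := k) =
      convSMul Φinv (ΔA.ρ ∘ₗ convUnit k C A) := by
    rw [← hconv1, hAmod.coaction_comp_conv hcolin, ← conv_convSMul, hconv2,
      convUnit_convSMul]
  intro c
  rw [rTensor_mulLeft_apply, ← convSMul_comp_convUnit_apply, ← hψ]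
  rfl
end

section
/- Let C be a coalgebra, A an algebra and right C-comodule, B as above, Φ : C → A a convolution invertible right C-comodule map such that a₍₀₎Φ⁻¹(a₍₁₎) ∈ B for all a ∈ A. Then A ≅ B ⊗ C as left B-modules and right C-comodules, via a ↦ a₍₀₎Φ⁻¹(a₍₁₎) ⊗ a₍₂₎ with inverse b ⊗ c ↦ bΦ(c). -/
open TensorProduct LinearMap

variable {k A C M : Type} [Field k] [Ring A] [Algebra k A]
  [AddCommGroup C] [Module k C] [Coalgebra k C] [AddCommGroup M] [Module k M]

section Helpers

open Coalgebra

variable {k A C : Type} [Field k] [Ring A] [Algebra k A]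
  [AddCommGroup C] [Module k C] [Coalgebra k C]

lemma conv_repr (f g : C →ₗ[k] A) (c : C) (r : Coalgebra.Repr k c (C × C)) :
    conv f g c = ∑ i ∈ r.index, f (r.left i) * g (r.right i) := by
  simp [conv, ← r.eq, map_sum, LinearMap.mul'_apply]

lemma counit_smul_sum (c : C) (r : Coalgebra.Repr k c (C × C)) :
    ∑ i ∈ r.index, Coalgebra.counit (R := k) (r.left i) • r.right i = c := by
  have h := Coalgebra.sum_counit_tmul_eq r
  have h2 := congrArg (TensorProduct.lid k C) h
  rw [map_sum] at h2
  simp only [TensorProduct.lid_tmul, one_smul] at h2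
  exact h2

end Helpers

set_option maxHeartbeats 2000000
set_option synthInstance.maxHeartbeats 400000

/-- under the hypotheses of Statement 4 (with `B` the subalgebra of
coinvariants), `A ≅ B ⊗ C` as left `B`-modules and right `C`-comodules, via
`a ↦ a₍₀₎Φ⁻¹(a₍₁₎) ⊗ a₍₂₎` with inverse `b ⊗ c ↦ bΦ(c)`. -/
theorem statement6 {k A C : Type} [Field k] [Ring A] [Algebra k A]
    [AddCommGroup C] [Module k C] [Coalgebra k C]
    (ΔA : RComod k C A) (B : Subalgebra k A)
    (hB : ∀ b : A, b ∈ B ↔ b ∈ coinvB k ΔA.ρ)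
    (Φ Φinv : C →ₗ[k] A)
    (hconv1 : conv Φ Φinv = convUnit k C A) (hconv2 : conv Φinv Φ = convUnit k C A)
    (hcolin : ΔA.ρ ∘ₗ Φ = Φ.rTensor C ∘ₗ Coalgebra.comul (R := k))
    (hcoin : ∀ a : A, mul' k A (Φinv.lTensor A (ΔA.ρ a)) ∈ B) :
    -- `β : B ⊗ C → A`, `b ⊗ c ↦ bΦ(c)`:
    Function.Bijective (mul' k A ∘ₗ TensorProduct.map (Subalgebra.val B).toLinearMap Φ) ∧
    -- `β` is left `B`-linear:
    (∀ (b : ↥B) (x : ↥B ⊗[k] C),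
      (mul' k A ∘ₗ TensorProduct.map (Subalgebra.val B).toLinearMap Φ)
          ((LinearMap.mulLeft k b).rTensor C x) =
        (b : A) * (mul' k A ∘ₗ TensorProduct.map (Subalgebra.val B).toLinearMap Φ) x) ∧
    -- `β` is right `C`-colinear (w.r.t. the coaction `B ⊗ Δ` on `B ⊗ C`):
    (ΔA.ρ ∘ₗ (mul' k A ∘ₗ TensorProduct.map (Subalgebra.val B).toLinearMap Φ) =
      (mul' k A ∘ₗ TensorProduct.map (Subalgebra.val B).toLinearMap Φ).rTensor C ∘ₗ
        coactMC k C ↥B) ∧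
    -- the inverse of `β` is induced by `θ : a ↦ a₍₀₎Φ⁻¹(a₍₁₎) ⊗ a₍₂₎`:
    ((((mul' k A) ∘ₗ Φinv.lTensor A).rTensor C ∘ₗ
        (TensorProduct.assoc k A C C).symm.toLinearMap ∘ₗ
        (Coalgebra.comul (R := k) (A := C)).lTensor A ∘ₗ ΔA.ρ) ∘ₗ
      (mul' k A ∘ₗ TensorProduct.map (Subalgebra.val B).toLinearMap Φ) =
      TensorProduct.map (Subalgebra.val B).toLinearMap LinearMap.id) := by
  classical
  -- Abbreviations
  set ρ := ΔA.ρ with hρdef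
  set β : ↥B ⊗[k] C →ₗ[k] A :=
    mul' k A ∘ₗ TensorProduct.map (Subalgebra.val B).toLinearMap Φ with hβdef
  set ν : A ⊗[k] C →ₗ[k] A := mul' k A ∘ₗ Φinv.lTensor A with hνdef
  set θ : A →ₗ[k] A ⊗[k] C :=
    (mul' k A ∘ₗ Φinv.lTensor A).rTensor C ∘ₗ
      (TensorProduct.assoc k A C C).symm.toLinearMap ∘ₗ
      (Coalgebra.comul (R := k) (A := C)).lTensor A ∘ₗ ρ with hθdef
  have hβ : ∀ (b : ↥B) (c : C), β (b ⊗ₜ[k] c) = (b : A) * Φ c := by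
    intro b c
    simp [hβdef, LinearMap.mul'_apply]
  have hρmul : ∀ b : A, b ∈ B → ∀ a : A,
      ρ (b * a) = (LinearMap.mulLeft k b).rTensor C (ρ a) := by
    intro b hb a
    exact (hB b).1 hb a
  have hρΦ : ∀ c : C, ρ (Φ c) = Φ.rTensor C (Coalgebra.comul (R := k) c) :=
    fun c => LinearMap.congr_fun hcolin c
  have hconvΦ : ∀ (c : C) (r : Coalgebra.Repr k c (C × C)),
      ∑ i ∈ r.index, Φ (r.left i) * Φinv (r.right i)
        = algebraMap k A (Coalgebra.counit (R := k) c) := by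
    intro c r
    rw [← conv_repr Φ Φinv c r, hconv1]
    simp [convUnit]
  have hconvΦ' : ∀ (c : C) (r : Coalgebra.Repr k c (C × C)),
      ∑ i ∈ r.index, Φinv (r.left i) * Φ (r.right i)
        = algebraMap k A (Coalgebra.counit (R := k) c) := by
    intro c r
    rw [← conv_repr Φinv Φ c r, hconv2]
    simp [convUnit]
  -- ρ (b * Φ c) expanded
  have hρbΦ : ∀ (b : A), b ∈ B → ∀ (c : C) (r : Coalgebra.Repr k c (C × C)),
      ρ (b * Φ c) = ∑ i ∈ r.index, (b * Φ (r.left i)) ⊗ₜ[k] r.right i := by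
    intro b hb c r
    rw [hρmul b hb, hρΦ, ← r.eq]
    simp [map_sum]
  -- ν (ρ (b * Φ c)) = ε c • b  for b ∈ B
  have hν : ∀ (b : A), b ∈ B → ∀ c : C,
      ν (ρ (b * Φ c)) = Coalgebra.counit (R := k) c • b := by
    intro b hb c
    rw [hρbΦ b hb c (Coalgebra.Repr.arbitrary k c), map_sum]
    have : ∀ i ∈ (Coalgebra.Repr.arbitrary k c).index,
        ν ((b * Φ ((Coalgebra.Repr.arbitrary k c).left i)) ⊗ₜ[k]
            (Coalgebra.Repr.arbitrary k c).right i)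
          = b * (Φ ((Coalgebra.Repr.arbitrary k c).left i) *
              Φinv ((Coalgebra.Repr.arbitrary k c).right i)) := by
      intro i _
      simp [hνdef, LinearMap.mul'_apply, mul_assoc]
    rw [Finset.sum_congr rfl this, ← Finset.mul_sum,
      hconvΦ c (Coalgebra.Repr.arbitrary k c), ← Algebra.commutes, ← Algebra.smul_def]
  -- alternative formula for θ via coassociativity of the coaction
  have hθa : ∀ a : A, θ a = (ν ∘ₗ ρ).rTensor C (ρ a) := by
    intro a
    have hc := LinearMap.congr_fun ΔA.coassoc a
    simp only [LinearMap.coe_comp, Function.comp_apply, LinearEquiv.coe_coe] at hc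
    simp only [hθdef, LinearMap.coe_comp, Function.comp_apply, LinearEquiv.coe_coe]
    rw [hc, LinearEquiv.symm_apply_apply]
    conv_rhs => rw [hνdef, hρdef, LinearMap.rTensor_comp]
    simp only [LinearMap.coe_comp, Function.comp_apply]
  -- Key identity (statement 4): θ ∘ β = val ⊗ id
  have key4 : θ ∘ₗ β = TensorProduct.map (Subalgebra.val B).toLinearMap LinearMap.id := by
    apply TensorProduct.ext'
    intro b c
    have hb : (b : A) ∈ B := b.2
    set r := Coalgebra.Repr.arbitrary k c with hr
    simp only [LinearMap.coe_comp, Function.comp_apply]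
    rw [hβ b c, hθa, hρbΦ (b : A) hb c r, map_sum]
    have hterm : ∀ i ∈ r.index,
        (ν ∘ₗ ρ).rTensor C (((b : A) * Φ (r.left i)) ⊗ₜ[k] r.right i)
          = (b : A) ⊗ₜ[k] (Coalgebra.counit (R := k) (r.left i) • r.right i) := by
      intro i _
      rw [LinearMap.rTensor_tmul]
      simp only [LinearMap.coe_comp, Function.comp_apply]
      rw [hν (b : A) hb (r.left i)]
      rw [TensorProduct.smul_tmul]
    rw [Finset.sum_congr rfl hterm, ← TensorProduct.tmul_sum, counit_smul_sum c r]
    simp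
  -- β ∘ θ = id (pointwise)
  have hβθ : ∀ a : A, mul' k A (Φ.lTensor A (θ a)) = a := by
    intro a
    obtain ⟨s, hs⟩ := TensorProduct.exists_finset (ρ a)
    have hcu := LinearMap.congr_fun ΔA.counit_id a
    simp only [LinearMap.coe_comp, Function.comp_apply, LinearEquiv.coe_coe,
      LinearMap.id_apply] at hcu
    rw [hs] at hcu
    simp only [map_sum, LinearMap.lTensor_tmul, TensorProduct.rid_tmul] at hcu
    have hθval : θ a = ∑ p ∈ s, ∑ j ∈ (Coalgebra.Repr.arbitrary k p.2).index,
        (p.1 * Φinv ((Coalgebra.Repr.arbitrary k p.2).left j)) ⊗ₜ[k]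
          (Coalgebra.Repr.arbitrary k p.2).right j := by
      simp only [hθdef, LinearMap.coe_comp, Function.comp_apply, LinearEquiv.coe_coe, ← hνdef]
      rw [hs, map_sum, map_sum, map_sum]
      refine Finset.sum_congr rfl fun p _ => ?_
      rw [LinearMap.lTensor_tmul, ← (Coalgebra.Repr.arbitrary k p.2).eq,
        TensorProduct.tmul_sum, map_sum, map_sum]
      refine Finset.sum_congr rfl fun j _ => ?_
      rw [TensorProduct.assoc_symm_tmul, LinearMap.rTensor_tmul]
      simp [hνdef, LinearMap.mul'_apply]
    rw [hθval, map_sum, map_sum]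
    have : ∀ p ∈ s, mul' k A (Φ.lTensor A
        (∑ j ∈ (Coalgebra.Repr.arbitrary k p.2).index,
          (p.1 * Φinv ((Coalgebra.Repr.arbitrary k p.2).left j)) ⊗ₜ[k]
            (Coalgebra.Repr.arbitrary k p.2).right j))
        = Coalgebra.counit (R := k) p.2 • p.1 := by
      intro p _
      rw [map_sum, map_sum]
      have h1 : ∀ j ∈ (Coalgebra.Repr.arbitrary k p.2).index,
          mul' k A (Φ.lTensor A
            ((p.1 * Φinv ((Coalgebra.Repr.arbitrary k p.2).left j)) ⊗ₜ[k]
              (Coalgebra.Repr.arbitrary k p.2).right j))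
            = p.1 * (Φinv ((Coalgebra.Repr.arbitrary k p.2).left j) *
                Φ ((Coalgebra.Repr.arbitrary k p.2).right j)) := by
        intro j _
        simp [LinearMap.mul'_apply, mul_assoc]
      rw [Finset.sum_congr rfl h1, ← Finset.mul_sum,
        hconvΦ' p.2 (Coalgebra.Repr.arbitrary k p.2), ← Algebra.commutes, ← Algebra.smul_def]
    rw [Finset.sum_congr rfl this, hcu]
  -- Bijectivity of β
  have hsurj : Function.Surjective β := by
    intro a
    obtain ⟨s, hs⟩ := TensorProduct.exists_finset (ρ a)
    refine ⟨∑ p ∈ s, (⟨ν (ρ p.1), ?_⟩ : ↥B) ⊗ₜ[k] p.2, ?_⟩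
    · simpa [hνdef] using hcoin p.1
    · have hx : β (∑ p ∈ s, (⟨ν (ρ p.1), hcoin p.1⟩ : ↥B) ⊗ₜ[k] p.2)
          = mul' k A (Φ.lTensor A ((ν ∘ₗ ρ).rTensor C (ρ a))) := by
        rw [hs, map_sum, map_sum, map_sum, map_sum]
        refine Finset.sum_congr rfl fun p _ => ?_
        simp [hβdef, LinearMap.mul'_apply]
      rw [hx, ← hθa, hβθ]
  have hinj : Function.Injective β := by
    have hval : Function.Injective
        (TensorProduct.map (Subalgebra.val B).toLinearMap (LinearMap.id (M := C))) := by
      have : TensorProduct.map (Subalgebra.val B).toLinearMap (LinearMap.id (M := C))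
          = ((Subalgebra.val B).toLinearMap).rTensor C := rfl
      rw [this]
      exact Module.Flat.rTensor_preserves_injective_linearMap _ Subtype.val_injective
    intro x y hxy
    have h2 : θ (β x) = θ (β y) := by rw [hxy]
    have h3 := LinearMap.congr_fun key4 x
    have h4 := LinearMap.congr_fun key4 y
    simp only [LinearMap.coe_comp, Function.comp_apply] at h3 h4
    exact hval (by rw [← h3, ← h4, h2])
  refine ⟨⟨hinj, hsurj⟩, ?_, ?_, key4⟩
  · -- left B-linearity
    intro b x
    induction x using TensorProduct.induction_on with
    | zero => simp only [map_zero, mul_zero]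
    | tmul b' c =>
        rw [LinearMap.rTensor_tmul, LinearMap.mulLeft_apply, hβ, hβ]
        push_cast
        rw [mul_assoc]
    | add u v hu hv =>
        rw [map_add, map_add, map_add, hu, hv, mul_add]
  · -- colinearity
    apply TensorProduct.ext'
    intro b c
    have hb : (b : A) ∈ B := b.2
    set r := Coalgebra.Repr.arbitrary k c with hr
    simp only [LinearMap.coe_comp, Function.comp_apply]
    rw [hβ b c, hρbΦ (b : A) hb c r]
    show _ = β.rTensor C (coactMC k C ↥B (b ⊗ₜ[k] c))
    have hcoact : coactMC k C ↥B (b ⊗ₜ[k] c)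
        = ∑ i ∈ r.index, (b ⊗ₜ[k] r.left i) ⊗ₜ[k] r.right i := by
      simp only [coactMC, LinearMap.coe_comp, Function.comp_apply, LinearEquiv.coe_coe,
        LinearMap.lTensor_tmul]
      rw [← r.eq, TensorProduct.tmul_sum, map_sum]
      exact Finset.sum_congr rfl fun i _ => TensorProduct.assoc_symm_tmul ..
    rw [hcoact, map_sum]
    exact Finset.sum_congr rfl fun i _ => by rw [LinearMap.rTensor_tmul, hβ]
end

section
/- Let A(B)^C be a C-Galois extension with canonical entwining map ψ, and let C(A) be the set of convolution invertible maps f : C → A satisfying ψ(c₍₁₎ ⊗ f(c₍₂₎)) = f(c₍₁₎) ⊗ c₍₂₎. If f ∈ C(A), then its convolution inverse f⁻¹ also satisfies ψ(c₍₁₎ ⊗ f⁻¹(c₍₂₎)) = f⁻¹(c₍₁₎) ⊗ c₍₂₎; hence C(A) is a group under convolution with identity η∘ε. -/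
/-!
Via `ψ`, `A ⊗ C` is a right `A`-module, `(a ⊗ c) · b = a ψ(c ⊗ b)` (`entwAct`); this is an
action precisely because `ψ ∘ (C ⊗ μ) = (μ ⊗ C) ∘ (A ⊗ ψ) ∘ (ψ ⊗ A)`, and unital because
`ψ(c ⊗ 1) = 1 ⊗ c`. Hence the convolution algebra `Hom(C, A)` acts on the right on
`Hom(C, A ⊗ C)` by `(Φ ◁ h)(c) = Φ(c₍₁₎) · h(c₍₂₎)`. Writing `L f = ψ ∘ (C ⊗ f) ∘ Δ` and
`R f = (f ⊗ C) ∘ Δ`, one has `L f ◁ h = L (f * h)` always and `R f ◁ h = R (f * h)` when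
`L h = R h`. So if `L f = R f` and `g = f⁻¹`, then `L g ◁ f = L 1 = R 1 = R g ◁ f`, and acting
by `g` gives `L g = R g`.
-/

open TensorProduct LinearMap

variable {k A C M : Type} [Field k] [Ring A] [Algebra k A]
  [AddCommGroup C] [Module k C] [Coalgebra k C] [AddCommGroup M] [Module k M]

open Coalgebra WithConv

section ConvBy

variable {R C X Y Z U V W : Type*} [CommSemiring R] [AddCommMonoid C] [Module R C]
  [AddCommMonoid X] [Module R X] [AddCommMonoid Y] [Module R Y] [AddCommMonoid Z] [Module R Z]
  [AddCommMonoid U] [Module R U] [AddCommMonoid V] [Module R V] [AddCommMonoid W] [Module R W]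

def convBy [CoalgebraStruct R C] (ν : X ⊗[R] Y →ₗ[R] Z) (f : C →ₗ[R] X) (g : C →ₗ[R] Y) :
    C →ₗ[R] Z :=
  ν ∘ₗ map f g ∘ₗ comul

variable [Coalgebra R C]

theorem convBy_convBy {ν₁ : X ⊗[R] Y →ₗ[R] U} {ν₂ : U ⊗[R] Z →ₗ[R] W}
    {ν₃ : X ⊗[R] V →ₗ[R] W} {ν₄ : Y ⊗[R] Z →ₗ[R] V}
    (hν : ∀ x y z, ν₂ (ν₁ (x ⊗ₜ y) ⊗ₜ z) = ν₃ (x ⊗ₜ ν₄ (y ⊗ₜ z)))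
    (f : C →ₗ[R] X) (g : C →ₗ[R] Y) (h : C →ₗ[R] Z) :
    convBy ν₂ (convBy ν₁ f g) h = convBy ν₃ f (convBy ν₄ g h) := by
  have hν' : ν₂ ∘ₗ ν₁.rTensor Z ∘ₗ (TensorProduct.assoc R X Y Z).symm.toLinearMap =
      ν₃ ∘ₗ ν₄.lTensor X := by
    ext x y z; exact hν x y z
  calc convBy ν₂ (convBy ν₁ f g) h
      = ν₂ ∘ₗ ν₁.rTensor Z ∘ₗ map (map f g) h ∘ₗ comul.rTensor C ∘ₗ comul := by
        simp only [convBy, ← comp_assoc, ← map_comp_rTensor, rTensor_comp_map]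
    _ = ν₂ ∘ₗ ν₁.rTensor Z ∘ₗ (map (map f g) h ∘ₗ (TensorProduct.assoc R C C C).symm.toLinearMap)
          ∘ₗ comul.lTensor C ∘ₗ comul := by
        simp only [← coassoc_symm, comp_assoc]
    _ = (ν₂ ∘ₗ ν₁.rTensor Z ∘ₗ (TensorProduct.assoc R X Y Z).symm.toLinearMap) ∘ₗ
          map f (map g h) ∘ₗ comul.lTensor C ∘ₗ comul := by
        simp only [map_map_comp_assoc_symm_eq, comp_assoc]
    _ = convBy ν₃ f (convBy ν₄ g h) := by
        rw [hν']
        simp only [convBy, comp_assoc, ← map_comp_lTensor]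
        simp only [← comp_assoc, lTensor_comp_map, map_comp_lTensor]

theorem convBy_algebraMap_comp_counit_apply {A : Type*} [Semiring A] [Algebra R A] (ν : X ⊗[R] A →ₗ[R] Z) (f : C →ₗ[R] X) (c : C) :
    convBy ν f (Algebra.linearMap R A ∘ₗ counit) c = ν (f c ⊗ₜ 1) := by
  rw [convBy, ← map_comp_lTensor, comp_assoc, lTensor_counit_comp_comul]
  simp

theorem algebraMap_comp_counit_convBy_apply {A : Type*} [Semiring A] [Algebra R A] (ν : A ⊗[R] Y →ₗ[R] Z) (g : C →ₗ[R] Y) (c : C) :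
    convBy ν (Algebra.linearMap R A ∘ₗ counit) g c = ν (1 ⊗ₜ g c) := by
  rw [convBy, ← map_comp_rTensor, comp_assoc, rTensor_counit_comp_comul]
  simp

end ConvBy

theorem isUnit_toConv_iff (f : C →ₗ[k] A) :
    IsUnit (toConv f) ↔ ∃ g, conv f g = convUnit k C A ∧ conv g f = convUnit k C A := by
  rw [isUnit_iff_exists, toConv_surjective.exists]
  exact exists_congr fun g => and_congr toConv_injective.eq_iff toConv_injective.eq_iff

namespace Entwining

variable (E : Entwining k A C)

local notation "D" => entwAct (M := A) E (mul' k A)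

/-- The condition `ψ(c₍₁₎ ⊗ f(c₍₂₎)) = f(c₍₁₎) ⊗ c₍₂₎` cutting out `C(A)`. -/
def IsCompatible (f : C →ₗ[k] A) : Prop :=
  E.ψ ∘ₗ f.lTensor C ∘ₗ comul = f.rTensor C ∘ₗ comul

theorem isCompatible_iff (f : C →ₗ[k] A) :
    E.IsCompatible f ↔ convBy E.ψ LinearMap.id f = convBy LinearMap.id f LinearMap.id :=
  Iff.rfl

theorem entwAct_tmul (a : A) (c : C) (b : A) :
    D ((a ⊗ₜ c) ⊗ₜ b) = (mulLeft k a).rTensor C (E.ψ (c ⊗ₜ b)) := by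
  have hmul : (mul' k A).rTensor C ∘ₗ (TensorProduct.assoc k A A C).symm.toLinearMap ∘ₗ
      TensorProduct.mk k A (A ⊗[k] C) a = (mulLeft k a).rTensor C := by
    ext; simp
  simpa [entwAct] using congr($hmul (E.ψ (c ⊗ₜ b)))

theorem entwAct_rTensor_mulLeft (a : A) (x : A ⊗[k] C) (b : A) :
    D ((mulLeft k a).rTensor C x ⊗ₜ b) = (mulLeft k a).rTensor C (D (x ⊗ₜ b)) := by
  induction x using TensorProduct.induction_on with
  | zero => simp
  | tmul a' c =>
    simp only [rTensor_tmul, mulLeft_apply, entwAct_tmul, mulLeft_mul, rTensor_comp, comp_apply]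
  | add x y hx hy => simp only [map_add, add_tmul, hx, hy]

theorem psi_tmul_mul (c : C) (a b : A) :
    E.ψ (c ⊗ₜ (a * b)) = D (E.ψ (c ⊗ₜ a) ⊗ₜ b) := by
  simpa [entwAct, mul'_apply] using congr($(E.entw_mul) (c ⊗ₜ (a ⊗ₜ b)))

theorem entwAct_entwAct (x : A ⊗[k] C) (a b : A) :
    D (D (x ⊗ₜ a) ⊗ₜ b) = D (x ⊗ₜ (a * b)) := by
  induction x using TensorProduct.induction_on with
  | zero => simp
  | tmul a' c => rw [entwAct_tmul, entwAct_rTensor_mulLeft, ← psi_tmul_mul, entwAct_tmul]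
  | add x y hx hy => simp only [add_tmul, map_add, hx, hy]

theorem entwAct_tmul_one (x : A ⊗[k] C) : D (x ⊗ₜ 1) = x := by
  induction x using TensorProduct.induction_on with
  | zero => simp
  | tmul a c => simp [entwAct_tmul, E.entw_unit]
  | add x y hx hy => rw [add_tmul, map_add, hx, hy]

theorem convBy_entwAct_conv (Φ : C →ₗ[k] A ⊗[k] C) (h h' : C →ₗ[k] A) :
    convBy D (convBy D Φ h) h' = convBy D Φ (conv h h') :=
  convBy_convBy (fun x a b => by rw [entwAct_entwAct, mul'_apply]) Φ h h'

theorem convBy_entwAct_convUnit (Φ : C →ₗ[k] A ⊗[k] C) : convBy D Φ (convUnit k C A) = Φ :=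
  LinearMap.ext fun c => by rw [convUnit, convBy_algebraMap_comp_counit_apply, entwAct_tmul_one]

theorem convBy_entwAct_convBy_psi (h h' : C →ₗ[k] A) :
    convBy D (convBy E.ψ LinearMap.id h) h' = convBy E.ψ LinearMap.id (conv h h') :=
  convBy_convBy (fun c a b => by rw [mul'_apply, psi_tmul_mul]) LinearMap.id h h'

theorem convBy_entwAct_convBy_id {h' : C →ₗ[k] A} (hh' : E.IsCompatible h') (h : C →ₗ[k] A) :
    convBy D (convBy LinearMap.id h LinearMap.id) h' =
      convBy LinearMap.id (conv h h') LinearMap.id := by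
  let μ : A ⊗[k] (A ⊗[k] C) →ₗ[k] A ⊗[k] C :=
    (mul' k A).rTensor C ∘ₗ (TensorProduct.assoc k A A C).symm.toLinearMap
  calc convBy D (convBy LinearMap.id h LinearMap.id) h'
      = convBy μ h (convBy E.ψ LinearMap.id h') := convBy_convBy (fun _ _ _ => rfl) _ _ _
    _ = convBy μ h (convBy LinearMap.id h' LinearMap.id) := congrArg (convBy μ h) hh'
    _ = convBy LinearMap.id (conv h h') LinearMap.id :=
        (convBy_convBy (fun a b c => by simp [μ, mul'_apply]) _ _ _).symm

theorem isCompatible_convUnit : E.IsCompatible (convUnit k C A) := by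
  rw [isCompatible_iff]
  ext c
  rw [convUnit, convBy_algebraMap_comp_counit_apply, algebraMap_comp_counit_convBy_apply,
    E.entw_unit]
  rfl

theorem IsCompatible.of_conv_eq_convUnit {f g : C →ₗ[k] A} (hf : E.IsCompatible f)
    (hfg : conv f g = convUnit k C A) (hgf : conv g f = convUnit k C A) :
    E.IsCompatible g := by
  rw [isCompatible_iff]
  have hψ : convBy D (convBy E.ψ LinearMap.id g) f =
      convBy LinearMap.id (convUnit k C A) LinearMap.id := by
    rw [convBy_entwAct_convBy_psi, hgf]
    exact (E.isCompatible_iff _).1 E.isCompatible_convUnit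
  have hτ : convBy D (convBy LinearMap.id g LinearMap.id) f =
      convBy LinearMap.id (convUnit k C A) LinearMap.id := by
    rw [convBy_entwAct_convBy_id E hf, hgf]
  calc convBy E.ψ LinearMap.id g
      = convBy D (convBy E.ψ LinearMap.id g) (conv f g) := by
        rw [hfg, convBy_entwAct_convUnit]
    _ = convBy D (convBy D (convBy E.ψ LinearMap.id g) f) g := (convBy_entwAct_conv E ..).symm
    _ = convBy D (convBy D (convBy LinearMap.id g LinearMap.id) f) g := by rw [hψ, hτ]
    _ = convBy D (convBy LinearMap.id g LinearMap.id) (conv f g) := convBy_entwAct_conv E ..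
    _ = convBy LinearMap.id g LinearMap.id := by rw [hfg, convBy_entwAct_convUnit]

theorem IsCompatible.conv {f g : C →ₗ[k] A} (hf : E.IsCompatible f) (hg : E.IsCompatible g) :
    E.IsCompatible (conv f g) := by
  rw [isCompatible_iff] at hf ⊢
  rw [← convBy_entwAct_convBy_psi, hf, convBy_entwAct_convBy_id E hg]

end Entwining

theorem statement8_general {k A C : Type} [Field k] [Ring A] [Algebra k A]
    [AddCommGroup C] [Module k C] [Coalgebra k C]
    (E : Entwining k A C) :
    let ψcond : (C →ₗ[k] A) → Prop := fun f =>
      E.ψ ∘ₗ f.lTensor C ∘ₗ Coalgebra.comul (R := k) =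
        f.rTensor C ∘ₗ Coalgebra.comul (R := k)
    let CA : (C →ₗ[k] A) → Prop := fun f =>
      (∃ g, conv f g = convUnit k C A ∧ conv g f = convUnit k C A) ∧ ψcond f
    (∀ f g : C →ₗ[k] A, conv f g = convUnit k C A → conv g f = convUnit k C A →
      ψcond f → ψcond g) ∧
    ψcond (convUnit k C A) ∧
    (∀ f₁ f₂, CA f₁ → CA f₂ → CA (conv f₁ f₂)) := by
  refine ⟨fun _ _ hfg hgf hf => Entwining.IsCompatible.of_conv_eq_convUnit E hf hfg hgf,
    E.isCompatible_convUnit, ?_⟩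
  rintro f₁ f₂ ⟨hunit₁, hf₁⟩ ⟨hunit₂, hf₂⟩
  refine ⟨(isUnit_toConv_iff _).1 ?_, Entwining.IsCompatible.conv E hf₁ hf₂⟩
  exact ((isUnit_toConv_iff f₁).2 hunit₁).mul ((isUnit_toConv_iff f₂).2 hunit₂)

/-- for a `C`-Galois extension with canonical entwining map `ψ`, if `f`
is convolution invertible and satisfies `ψ(c₍₁₎ ⊗ f(c₍₂₎)) = f(c₍₁₎) ⊗ c₍₂₎`, then so
does its convolution inverse; hence `C(A)` is a group under convolution with
identity `η∘ε`. -/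
theorem statement8 {k A C : Type} [Field k] [Ring A] [Algebra k A]
    [AddCommGroup C] [Module k C] [Coalgebra k C]
    (ΔA : RComod k C A)
    (hsurj : Function.Surjective (canHat ΔA.ρ))
    (hker : LinearMap.ker (canHat ΔA.ρ) = relSub k (coinvB k ΔA.ρ))
    (E : Entwining k A C) (hE : EntwCompat E (mulRAct k A) ΔA) :
    let ψcond : (C →ₗ[k] A) → Prop := fun f =>
      E.ψ ∘ₗ f.lTensor C ∘ₗ Coalgebra.comul (R := k) =
        f.rTensor C ∘ₗ Coalgebra.comul (R := k)
    let CA : (C →ₗ[k] A) → Prop := fun f =>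
      (∃ g, conv f g = convUnit k C A ∧ conv g f = convUnit k C A) ∧ ψcond f
    (∀ f g : C →ₗ[k] A, conv f g = convUnit k C A → conv g f = convUnit k C A →
      ψcond f → ψcond g) ∧
    ψcond (convUnit k C A) ∧
    (∀ f₁ f₂, CA f₁ → CA f₂ → CA (conv f₁ f₂)) :=
  statement8_general E
end

section
/- Let (α,γ) be a measuring of an entwining structure (Ã,C̃)_ψ̃ to (A,C)_ψ. For every right A-module M, the space M ⊗ C̃ is a right (Ã,C̃)_ψ̃-module with coaction M⊗Δ̃ and action (m ⊗ c̃)·ã = m·α(c̃₍₁₎ ⊗ ã_β) ⊗ c̃₍₂₎^β, where ψ̃(c̃⊗ã) = ã_β⊗c̃^β. -/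
open TensorProduct LinearMap

variable {k A C M : Type} [Field k] [Ring A] [Algebra k A]
  [AddCommGroup C] [Module k C] [Coalgebra k C] [AddCommGroup M] [Module k M]

/-- A measuring of the entwining structure `(A',C')_ψ'` to `(A,C)_ψ`
(`A' = Ã`, `C' = C̃` in the paper's notation). -/
structure Measuring (k A C A' C' : Type) [Field k] [Ring A] [Algebra k A]
    [AddCommGroup C] [Module k C] [Coalgebra k C]
    [Ring A'] [Algebra k A'] [AddCommGroup C'] [Module k C'] [Coalgebra k C']
    (E : Entwining k A C) (E' : Entwining k A' C') where
  α : C' ⊗[k] A' →ₗ[k] A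
  γ : C' →ₗ[k] A ⊗[k] C
  meas_mul : α ∘ₗ (mul' k A').lTensor C' =
    mul' k A ∘ₗ TensorProduct.map α α ∘ₗ
      (TensorProduct.assoc k C' A' (C' ⊗[k] A')).symm.toLinearMap ∘ₗ
      ((TensorProduct.assoc k A' C' A').toLinearMap ∘ₗ E'.ψ.rTensor A' ∘ₗ
        (TensorProduct.assoc k C' A' A').symm.toLinearMap).lTensor C' ∘ₗ
      (TensorProduct.assoc k C' C' (A' ⊗[k] A')).toLinearMap ∘ₗ
      (Coalgebra.comul (R := k) (A := C')).rTensor (A' ⊗[k] A')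
  meas_unit : ∀ c : C', α (c ⊗ₜ[k] 1) = Coalgebra.counit (R := k) c • (1 : A)
  meas_comul : (mul' k A).rTensor (C ⊗[k] C) ∘ₗ
      (TensorProduct.assoc k A A (C ⊗[k] C)).symm.toLinearMap ∘ₗ
      ((TensorProduct.assoc k A C C).toLinearMap ∘ₗ E.ψ.rTensor C ∘ₗ
        (TensorProduct.assoc k C A C).symm.toLinearMap).lTensor A ∘ₗ
      (TensorProduct.assoc k A C (A ⊗[k] C)).toLinearMap ∘ₗ
      TensorProduct.map γ γ ∘ₗ Coalgebra.comul (R := k) =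
    (Coalgebra.comul (R := k) (A := C)).lTensor A ∘ₗ γ
  meas_counit : (TensorProduct.rid k A).toLinearMap ∘ₗ
      (Coalgebra.counit (R := k) (A := C)).lTensor A ∘ₗ γ =
    Algebra.linearMap k A ∘ₗ Coalgebra.counit (R := k) (A := C')
  meas_compat : (mul' k A).rTensor C ∘ₗ
      (TensorProduct.assoc k A A C).symm.toLinearMap ∘ₗ
      TensorProduct.map α γ ∘ₗ
      (TensorProduct.assoc k C' A' C').symm.toLinearMap ∘ₗ E'.ψ.lTensor C' ∘ₗ
      (TensorProduct.assoc k C' C' A').toLinearMap ∘ₗ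
      (Coalgebra.comul (R := k) (A := C')).rTensor A' =
    (mul' k A).rTensor C ∘ₗ
      (TensorProduct.assoc k A A C).symm.toLinearMap ∘ₗ E.ψ.lTensor A ∘ₗ
      (TensorProduct.assoc k A C A).toLinearMap ∘ₗ
      TensorProduct.map γ α ∘ₗ
      (TensorProduct.assoc k C' C' A').toLinearMap ∘ₗ
      (Coalgebra.comul (R := k) (A := C')).rTensor A'

variable {A' C' : Type} [Ring A'] [Algebra k A'] [AddCommGroup C'] [Module k C']
  [Coalgebra k C']

/-- The `A'`-action on `M ⊗ C'` induced by a measuring: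
`(m ⊗ c̃)·ã = m·α(c̃₍₁₎ ⊗ ã_β) ⊗ c̃₍₂₎^β`. -/
noncomputable def measAct {E : Entwining k A C} {E' : Entwining k A' C'}
    (m : Measuring k A C A' C' E E') (ν : M ⊗[k] A →ₗ[k] M) :
    (M ⊗[k] C') ⊗[k] A' →ₗ[k] M ⊗[k] C' :=
  ν.rTensor C' ∘ₗ (TensorProduct.assoc k M A C').symm.toLinearMap ∘ₗ
    (m.α.rTensor C' ∘ₗ (TensorProduct.assoc k C' A' C').symm.toLinearMap ∘ₗ
      E'.ψ.lTensor C' ∘ₗ (TensorProduct.assoc k C' C' A').toLinearMap ∘ₗ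
      (Coalgebra.comul (R := k) (A := C')).rTensor A').lTensor M ∘ₗ
    (TensorProduct.assoc k M C' A').toLinearMap


/-!
Put `G(c̃ ⊗ ã) = α(c̃₍₁₎ ⊗ ã_β) ⊗ c̃₍₂₎^β ∈ A ⊗ C̃`, so that the action is
`(m ⊗ c̃)·ã = m·G(c̃ ⊗ ã)`. For an arbitrary linear map `G : C̃ ⊗ Ã → A ⊗ C̃` this formula is a
unital associative action on every `M ⊗ C̃` as soon as it is one on `A ⊗ C̃` (the case `M = A`),
and it is compatible with the coaction `M ⊗ Δ̃` as soon as
`(A ⊗ Δ̃) G(c̃ ⊗ ã) = G(c̃₍₁₎ ⊗ ã_β) ⊗ c̃₍₂₎^β`.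

For our `G` this last identity only needs that `ψ̃` entwines `Δ̃`, and coassociativity: both sides
are `α(c̃₍₁₎ ⊗ ã_{βε}) ⊗ c̃₍₂₎^ε ⊗ c̃₍₃₎^β`. Associativity on `A ⊗ C̃` follows from it, because the
action of `b̃` on `A ⊗ C̃` comultiplies the `C̃`-leg first; what remains is that `ψ̃` entwines the
product of `Ã` and the multiplicativity (i) of `α`. Unitality comes from `ψ̃(c̃ ⊗ 1) = 1 ⊗ c̃`,
`α(c̃ ⊗ 1) = ε̃(c̃) 1` and counitality.
-/

section TwistedAction

variable {B D : Type} [Ring B] [Algebra k B] [AddCommGroup D] [Module k D]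
  (G : D ⊗[k] B →ₗ[k] A ⊗[k] D)

noncomputable def twistAct (ν : M ⊗[k] A →ₗ[k] M) : (M ⊗[k] D) ⊗[k] B →ₗ[k] M ⊗[k] D :=
  ν.rTensor D ∘ₗ (TensorProduct.assoc k M A D).symm.toLinearMap ∘ₗ G.lTensor M ∘ₗ
    (TensorProduct.assoc k M D B).toLinearMap

noncomputable def actTensor (ν : M ⊗[k] A →ₗ[k] M) (x : M) : A ⊗[k] D →ₗ[k] M ⊗[k] D :=
  ν.rTensor D ∘ₗ (TensorProduct.assoc k M A D).symm.toLinearMap ∘ₗ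
    TensorProduct.mk k M (A ⊗[k] D) x

@[simp]
theorem actTensor_tmul (ν : M ⊗[k] A →ₗ[k] M) (x : M) (a : A) (c : D) :
    actTensor ν x (a ⊗ₜ c) = ν (x ⊗ₜ a) ⊗ₜ c := by
  simp [actTensor]

theorem twistAct_tmul_tmul (ν : M ⊗[k] A →ₗ[k] M) (x : M) (c : D) (a : B) :
    twistAct G ν ((x ⊗ₜ c) ⊗ₜ a) = actTensor ν x (G (c ⊗ₜ a)) := by
  simp [twistAct, actTensor]

theorem twistAct_actTensor_tmul (ν : RAct k A M) (x : M) (y : A ⊗[k] D) (b : B) :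
    twistAct G ν.act (actTensor ν.act x y ⊗ₜ b) =
      actTensor ν.act x (twistAct G (mul' k A) (y ⊗ₜ b)) := by
  induction y using TensorProduct.induction_on with
  | zero => simp
  | tmul a c =>
    simp only [actTensor_tmul, twistAct_tmul_tmul]
    induction G (c ⊗ₜ b) using TensorProduct.induction_on with
    | zero => simp
    | tmul a' c' => simp [ν.act_mul]
    | add p q hp hq => simp only [map_add, hp, hq]
  | add p q hp hq => simp only [add_tmul, map_add, hp, hq]

theorem twistAct_tmul_one (hG : ∀ c : D, G (c ⊗ₜ 1) = 1 ⊗ₜ c) (ν : RAct k A M)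
    (z : M ⊗[k] D) : twistAct G ν.act (z ⊗ₜ 1) = z := by
  induction z using TensorProduct.induction_on with
  | zero => simp
  | tmul x c => simp [twistAct_tmul_tmul, hG, ν.act_one]
  | add p q hp hq => rw [add_tmul, map_add, hp, hq]

theorem twistAct_twistAct
    (hG : ∀ (c : D) (a b : B), twistAct G (mul' k A) (G (c ⊗ₜ a) ⊗ₜ b) = G (c ⊗ₜ (a * b)))
    (ν : RAct k A M) (z : M ⊗[k] D) (a b : B) :
    twistAct G ν.act (twistAct G ν.act (z ⊗ₜ a) ⊗ₜ b) = twistAct G ν.act (z ⊗ₜ (a * b)) := by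
  induction z using TensorProduct.induction_on with
  | zero => simp
  | tmul x c => rw [twistAct_tmul_tmul, twistAct_actTensor_tmul, hG, twistAct_tmul_tmul]
  | add p q hp hq => simp only [add_tmul, map_add, hp, hq]

noncomputable def mulPairing (α : D ⊗[k] B →ₗ[k] A) : (A ⊗[k] D) ⊗[k] B →ₗ[k] A :=
  mul' k A ∘ₗ α.lTensor A ∘ₗ (TensorProduct.assoc k A D B).toLinearMap

theorem mulPairing_tmul (α : D ⊗[k] B →ₗ[k] A) (y : A) (w : D) (b : B) :
    mulPairing α ((y ⊗ₜ w) ⊗ₜ b) = y * α (w ⊗ₜ b) := by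
  simp [mulPairing]

end TwistedAction

theorem assoc_symm_tmul_eq_rTensor_mk {N P : Type} [AddCommGroup N] [Module k N]
    [AddCommGroup P] [Module k P] (x : M) (t : N ⊗[k] P) :
    (TensorProduct.assoc k M N P).symm (x ⊗ₜ t) = (TensorProduct.mk k M N x).rTensor P t := by
  induction t using TensorProduct.induction_on with
  | zero => simp
  | tmul n p => simp
  | add p q hp hq => simp only [tmul_add, map_add, hp, hq]

theorem coactMC_tmul (x : M) (c : C) :
    coactMC k C M (x ⊗ₜ c) =
      (TensorProduct.mk k M C x).rTensor C (Coalgebra.comul (R := k) (A := C) c) := by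
  simp [coactMC, assoc_symm_tmul_eq_rTensor_mk]

theorem coactMC_coassoc :
    (Coalgebra.comul (R := k) (A := C)).lTensor (M ⊗[k] C) ∘ₗ coactMC k C M =
      (TensorProduct.assoc k (M ⊗[k] C) C C).toLinearMap ∘ₗ
        (coactMC k C M).rTensor C ∘ₗ coactMC k C M := by
  refine TensorProduct.ext' fun x c => ?_
  have hmk : coactMC k C M ∘ₗ TensorProduct.mk k M C x =
      (TensorProduct.mk k M C x).rTensor C ∘ₗ Coalgebra.comul := LinearMap.ext (coactMC_tmul x)
  simp only [coe_comp, Function.comp_apply, LinearEquiv.coe_coe, coactMC_tmul]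
  calc _ = (TensorProduct.mk k M C x).rTensor (C ⊗[k] C)
        ((Coalgebra.comul (R := k) (A := C)).lTensor C (Coalgebra.comul c)) := by
        rw [← comp_apply (Coalgebra.comul.lTensor _), lTensor_comp_rTensor,
          ← rTensor_comp_lTensor]
        rfl
    _ = (TensorProduct.mk k M C x).rTensor (C ⊗[k] C) (TensorProduct.assoc k C C C
        ((Coalgebra.comul (R := k) (A := C)).rTensor C (Coalgebra.comul c))) := by
        rw [Coalgebra.coassoc_apply]
    _ = _ := by
        rw [rTensor_tensor, ← rTensor_comp_apply, hmk, rTensor_comp]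
        simp

theorem coactMC_counit :
    (TensorProduct.rid k (M ⊗[k] C)).toLinearMap ∘ₗ
      (Coalgebra.counit (R := k) (A := C)).lTensor (M ⊗[k] C) ∘ₗ coactMC k C M =
      LinearMap.id := by
  refine TensorProduct.ext' fun x c => ?_
  simp only [coe_comp, Function.comp_apply, LinearEquiv.coe_coe, coactMC_tmul]
  rw [← comp_apply (Coalgebra.counit.lTensor _), lTensor_comp_rTensor, ← rTensor_comp_lTensor,
    comp_apply, Coalgebra.lTensor_counit_comul]
  simp

theorem coactMC_actTensor (ν : M ⊗[k] A →ₗ[k] M) (x : M) (y : A ⊗[k] C) :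
    coactMC k C M (actTensor ν x y) =
      (actTensor ν x).rTensor C ((TensorProduct.assoc k A C C).symm
        ((Coalgebra.comul (R := k) (A := C)).lTensor A y)) := by
  induction y using TensorProduct.induction_on with
  | zero => simp
  | tmul a c =>
    have hmk : actTensor ν x ∘ₗ TensorProduct.mk k A C a =
        TensorProduct.mk k M C (ν (x ⊗ₜ a)) := by
      ext; simp
    rw [actTensor_tmul, coactMC_tmul, lTensor_tmul, assoc_symm_tmul_eq_rTensor_mk,
      ← rTensor_comp_apply, hmk]
  | add p q hp hq => simp only [map_add, hp, hq]

section Compat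

variable {E' : Entwining k A' C'} (G : C' ⊗[k] A' →ₗ[k] A ⊗[k] C')

theorem coactMC_comp_twistAct
    (hG : (Coalgebra.comul (R := k) (A := C')).lTensor A ∘ₗ G =
      (TensorProduct.assoc k A C' C').toLinearMap ∘ₗ G.rTensor C' ∘ₗ
        (TensorProduct.assoc k C' A' C').symm.toLinearMap ∘ₗ E'.ψ.lTensor C' ∘ₗ
        (TensorProduct.assoc k C' C' A').toLinearMap ∘ₗ
        (Coalgebra.comul (R := k) (A := C')).rTensor A')
    (ν : M ⊗[k] A →ₗ[k] M) :
    coactMC k C' M ∘ₗ twistAct G ν =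
      (twistAct G ν).rTensor C' ∘ₗ (TensorProduct.assoc k (M ⊗[k] C') A' C').symm.toLinearMap ∘ₗ
        E'.ψ.lTensor (M ⊗[k] C') ∘ₗ (TensorProduct.assoc k (M ⊗[k] C') C' A').toLinearMap ∘ₗ
        (coactMC k C' M).rTensor A' := by
  refine TensorProduct.ext' fun z a => ?_
  induction z using TensorProduct.induction_on with
  | zero => simp
  | tmul x c =>
    have hs : ∀ s : C' ⊗[k] C',
        (twistAct G ν).rTensor C' ((TensorProduct.assoc k (M ⊗[k] C') A' C').symm
          (E'.ψ.lTensor (M ⊗[k] C') (TensorProduct.assoc k (M ⊗[k] C') C' A'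
            ((TensorProduct.mk k M C' x).rTensor C' s ⊗ₜ a)))) =
        (actTensor ν x).rTensor C' (G.rTensor C' ((TensorProduct.assoc k C' A' C').symm
          (E'.ψ.lTensor C' (TensorProduct.assoc k C' C' A' (s ⊗ₜ a))))) := by
      intro s
      induction s using TensorProduct.induction_on with
      | zero => simp
      | tmul u v =>
        simp only [rTensor_tmul, assoc_tmul, lTensor_tmul, mk_apply]
        induction E'.ψ (v ⊗ₜ a) using TensorProduct.induction_on with
        | zero => simp
        | tmul a' c' => simp [twistAct_tmul_tmul]
        | add p q hp hq => simp only [tmul_add, map_add, hp, hq]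
      | add p q hp hq => simp only [add_tmul, map_add, hp, hq]
    have hGc := LinearMap.congr_fun hG (c ⊗ₜ a)
    simp only [coe_comp, Function.comp_apply, LinearEquiv.coe_coe, rTensor_tmul] at hGc ⊢
    rw [twistAct_tmul_tmul, coactMC_actTensor, hGc, LinearEquiv.symm_apply_apply, coactMC_tmul,
      hs]
  | add p q hp hq => simp only [add_tmul, map_add, hp, hq]

end Compat

section MeasuringTwist

variable (α : C' ⊗[k] A' →ₗ[k] A) (E' : Entwining k A' C')

-- `(u ⊗ v) ⊗ ã ↦ α(u ⊗ ã_β) ⊗ v^β`, so that `measTwist` is the map `G` above.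
noncomputable def measPair : (C' ⊗[k] C') ⊗[k] A' →ₗ[k] A ⊗[k] C' :=
  α.rTensor C' ∘ₗ (TensorProduct.assoc k C' A' C').symm.toLinearMap ∘ₗ E'.ψ.lTensor C' ∘ₗ
    (TensorProduct.assoc k C' C' A').toLinearMap

noncomputable def measTwist : C' ⊗[k] A' →ₗ[k] A ⊗[k] C' :=
  measPair α E' ∘ₗ (Coalgebra.comul (R := k) (A := C')).rTensor A'

theorem measAct_eq_twistAct {E : Entwining k A C} (m : Measuring k A C A' C' E E')
    (ν : M ⊗[k] A →ₗ[k] M) : measAct m ν = twistAct (measTwist m.α E') ν :=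
  rfl

theorem measTwist_tmul (c : C') (a : A') :
    measTwist α E' (c ⊗ₜ a) = measPair α E' (Coalgebra.comul (R := k) (A := C') c ⊗ₜ a) := by
  simp [measTwist]

theorem measPair_tmul (u v : C') (a : A') :
    measPair α E' ((u ⊗ₜ v) ⊗ₜ a) =
      α.rTensor C' ((TensorProduct.assoc k C' A' C').symm (u ⊗ₜ E'.ψ (v ⊗ₜ a))) := by
  simp [measPair]

theorem measTwist_tmul_one (hα : ∀ c : C', α (c ⊗ₜ 1) = Coalgebra.counit (R := k) c • (1 : A))
    (c : C') :
    measTwist α E' (c ⊗ₜ 1) = 1 ⊗ₜ c := by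
  have h : ∀ s : C' ⊗[k] C', measPair α E' (s ⊗ₜ 1) =
      (Algebra.linearMap k A).rTensor C' ((Coalgebra.counit (R := k) (A := C')).rTensor C' s) := by
    intro s
    induction s using TensorProduct.induction_on with
    | zero => simp
    | tmul u v =>
      simp [measPair_tmul, E'.entw_unit, hα, Algebra.algebraMap_eq_smul_one]
    | add p q hp hq => simp only [add_tmul, map_add, hp, hq]
  rw [measTwist_tmul, h, Coalgebra.rTensor_counit_comul]
  simp

-- `((u₁ ⊗ u₂) ⊗ v) ⊗ ã ↦ α(u₁ ⊗ ã_{βε}) ⊗ (u₂^ε ⊗ v^β)`: both sides of the comultiplicativity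
-- of `measTwist` are this map evaluated on a bracketing of the triple coproduct.
noncomputable def measTriple : ((C' ⊗[k] C') ⊗[k] C') ⊗[k] A' →ₗ[k] A ⊗[k] (C' ⊗[k] C') :=
  (TensorProduct.assoc k A C' C').toLinearMap ∘ₗ (measPair α E').rTensor C' ∘ₗ
    (TensorProduct.assoc k (C' ⊗[k] C') A' C').symm.toLinearMap ∘ₗ E'.ψ.lTensor (C' ⊗[k] C') ∘ₗ
    (TensorProduct.assoc k (C' ⊗[k] C') C' A').toLinearMap

theorem lTensor_comul_measPair (s : C' ⊗[k] C') (a : A') :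
    (Coalgebra.comul (R := k) (A := C')).lTensor A (measPair α E' (s ⊗ₜ a)) =
      measTriple α E' ((TensorProduct.assoc k C' C' C').symm
        ((Coalgebra.comul (R := k) (A := C')).lTensor C' s) ⊗ₜ a) := by
  induction s using TensorProduct.induction_on with
  | zero => simp
  | tmul u v =>
    have hψ := LinearMap.congr_fun E'.entw_comul (v ⊗ₜ a)
    simp only [coe_comp, Function.comp_apply, LinearEquiv.coe_coe, rTensor_tmul] at hψ
    have hnat : ∀ t : A' ⊗[k] C',
        (Coalgebra.comul (R := k) (A := C')).lTensor A
          (α.rTensor C' ((TensorProduct.assoc k C' A' C').symm (u ⊗ₜ t))) =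
        α.rTensor (C' ⊗[k] C') ((TensorProduct.assoc k C' A' (C' ⊗[k] C')).symm
          (u ⊗ₜ (Coalgebra.comul (R := k) (A := C')).lTensor A' t)) := by
      intro t
      induction t using TensorProduct.induction_on with
      | zero => simp
      | tmul a' v' => simp
      | add p q hp hq => simp only [tmul_add, map_add, hp, hq]
    rw [measPair_tmul, hnat, hψ, lTensor_tmul]
    generalize Coalgebra.comul (R := k) (A := C') v = w
    induction w using TensorProduct.induction_on with
    | zero => simp
    | tmul v₁ v₂ =>
      simp only [assoc_tmul, lTensor_tmul, assoc_symm_tmul, measTriple, coe_comp,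
        Function.comp_apply, LinearEquiv.coe_coe]
      induction E'.ψ (v₂ ⊗ₜ a) using TensorProduct.induction_on with
      | zero => simp
      | tmul a' v'' =>
        simp only [assoc_symm_tmul, rTensor_tmul, measPair_tmul]
        induction E'.ψ (v₁ ⊗ₜ a') using TensorProduct.induction_on with
        | zero => simp
        | tmul a'' w => simp
        | add p q hp hq => simp only [add_tmul, tmul_add, map_add, hp, hq]
      | add p q hp hq => simp only [tmul_add, map_add, hp, hq]
    | add p q hp hq => simp only [add_tmul, tmul_add, map_add, hp, hq]
  | add p q hp hq => simp only [add_tmul, map_add, hp, hq]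

theorem measTriple_rTensor_comul (s : C' ⊗[k] C') (a : A') :
    measTriple α E' ((Coalgebra.comul (R := k) (A := C')).rTensor C' s ⊗ₜ a) =
      TensorProduct.assoc k A C' C' ((measTwist α E').rTensor C'
        ((TensorProduct.assoc k C' A' C').symm
          (E'.ψ.lTensor C' (TensorProduct.assoc k C' C' A' (s ⊗ₜ a))))) := by
  induction s using TensorProduct.induction_on with
  | zero => simp
  | tmul u v =>
    simp only [measTriple, coe_comp, Function.comp_apply, LinearEquiv.coe_coe, rTensor_tmul,
      assoc_tmul, lTensor_tmul]
    induction E'.ψ (v ⊗ₜ a) using TensorProduct.induction_on with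
    | zero => simp
    | tmul a' v' => simp [measTwist_tmul]
    | add p q hp hq => simp only [tmul_add, map_add, hp, hq]
  | add p q hp hq => simp only [add_tmul, map_add, hp, hq]

theorem measTwist_comul :
    (Coalgebra.comul (R := k) (A := C')).lTensor A ∘ₗ measTwist α E' =
      (TensorProduct.assoc k A C' C').toLinearMap ∘ₗ (measTwist α E').rTensor C' ∘ₗ
        (TensorProduct.assoc k C' A' C').symm.toLinearMap ∘ₗ E'.ψ.lTensor C' ∘ₗ
        (TensorProduct.assoc k C' C' A').toLinearMap ∘ₗ
        (Coalgebra.comul (R := k) (A := C')).rTensor A' := by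
  refine TensorProduct.ext' fun c a => ?_
  simp only [coe_comp, Function.comp_apply, LinearEquiv.coe_coe, rTensor_tmul]
  rw [measTwist_tmul, lTensor_comul_measPair, Coalgebra.coassoc_symm_apply,
    measTriple_rTensor_comul]

theorem coactMC_measTwist_tmul (c : C') (a : A') :
    coactMC k C' A (measTwist α E' (c ⊗ₜ a)) =
      (measTwist α E').rTensor C' ((TensorProduct.assoc k C' A' C').symm
        (E'.ψ.lTensor C' (TensorProduct.assoc k C' C' A'
          (Coalgebra.comul (R := k) (A := C') c ⊗ₜ a)))) := by
  have h := LinearMap.congr_fun (measTwist_comul α E') (c ⊗ₜ a)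
  simp only [coe_comp, Function.comp_apply, LinearEquiv.coe_coe, rTensor_tmul] at h
  simp only [coactMC, coe_comp, Function.comp_apply, LinearEquiv.coe_coe, h,
    LinearEquiv.symm_apply_apply]

theorem twistAct_measTwist_tmul (y : A ⊗[k] C') (b : A') :
    twistAct (measTwist α E') (mul' k A) (y ⊗ₜ b) =
      (mulPairing α).rTensor C' ((TensorProduct.assoc k (A ⊗[k] C') A' C').symm
        (E'.ψ.lTensor (A ⊗[k] C')
          (TensorProduct.assoc k (A ⊗[k] C') C' A' (coactMC k C' A y ⊗ₜ b)))) := by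
  induction y using TensorProduct.induction_on with
  | zero => simp
  | tmul a c =>
    rw [twistAct_tmul_tmul, measTwist_tmul, coactMC_tmul]
    induction Coalgebra.comul (R := k) (A := C') c using TensorProduct.induction_on with
    | zero => simp
    | tmul u v =>
      simp only [measPair_tmul, rTensor_tmul, mk_apply, assoc_tmul, lTensor_tmul]
      induction E'.ψ (v ⊗ₜ b) using TensorProduct.induction_on with
      | zero => simp
      | tmul b' v' => simp [mulPairing_tmul]
      | add p q hp hq => simp only [tmul_add, map_add, hp, hq]
    | add p q hp hq => simp only [add_tmul, map_add, hp, hq]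
  | add p q hp hq => simp only [add_tmul, map_add, hp, hq]

end MeasuringTwist

theorem Measuring.α_tmul_mul {E : Entwining k A C} {E' : Entwining k A' C'}
    (m : Measuring k A C A' C' E E') (c : C') (a b : A') :
    m.α (c ⊗ₜ (a * b)) = mulPairing m.α (measTwist m.α E' (c ⊗ₜ a) ⊗ₜ b) := by
  have h := LinearMap.congr_fun m.meas_mul (c ⊗ₜ (a ⊗ₜ b))
  simp only [coe_comp, Function.comp_apply, LinearEquiv.coe_coe, lTensor_tmul, mul'_apply,
    rTensor_tmul] at h
  rw [h, measTwist_tmul]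
  induction Coalgebra.comul (R := k) (A := C') c using TensorProduct.induction_on with
  | zero => simp
  | tmul u v =>
    simp only [assoc_tmul, lTensor_tmul, measPair_tmul, coe_comp, Function.comp_apply,
      LinearEquiv.coe_coe, assoc_symm_tmul, rTensor_tmul]
    induction E'.ψ (v ⊗ₜ a) using TensorProduct.induction_on with
    | zero => simp
    | tmul a' v' => simp [mulPairing_tmul]
    | add p q hp hq => simp only [add_tmul, tmul_add, map_add, hp, hq]
  | add p q hp hq => simp only [add_tmul, map_add, hp, hq]

theorem measTwist_mul {E : Entwining k A C} {E' : Entwining k A' C'}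
    (m : Measuring k A C A' C' E E') (c : C') (a b : A') :
    twistAct (measTwist m.α E') (mul' k A) (measTwist m.α E' (c ⊗ₜ a) ⊗ₜ b) =
      measTwist m.α E' (c ⊗ₜ (a * b)) := by
  rw [twistAct_measTwist_tmul, coactMC_measTwist_tmul, measTwist_tmul]
  induction Coalgebra.comul (R := k) (A := C') c using TensorProduct.induction_on with
  | zero => simp
  | tmul u v =>
    have hψ := LinearMap.congr_fun E'.entw_mul (v ⊗ₜ (a ⊗ₜ b))
    simp only [coe_comp, Function.comp_apply, LinearEquiv.coe_coe, lTensor_tmul, mul'_apply,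
      assoc_symm_tmul, rTensor_tmul] at hψ
    rw [measPair_tmul, hψ]
    simp only [assoc_tmul, lTensor_tmul]
    induction E'.ψ (v ⊗ₜ a) using TensorProduct.induction_on with
    | zero => simp
    | tmul a' v' =>
      simp only [assoc_symm_tmul, rTensor_tmul, assoc_tmul, lTensor_tmul]
      induction E'.ψ (v' ⊗ₜ b) using TensorProduct.induction_on with
      | zero => simp
      | tmul b' v'' => simp [Measuring.α_tmul_mul]
      | add p q hp hq => simp only [tmul_add, map_add, hp, hq]
    | add p q hp hq => simp only [add_tmul, tmul_add, map_add, hp, hq]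
  | add p q hp hq => simp only [add_tmul, map_add, hp, hq]

/-- if `(α,γ)` measures `(Ã,C̃)_ψ̃` to `(A,C)_ψ`, then for every right
`A`-module `M`, the space `M ⊗ C̃` is a right `(Ã,C̃)_ψ̃`-module with coaction
`M ⊗ Δ̃` and action `(m ⊗ c̃)·ã = m·α(c̃₍₁₎ ⊗ ã_β) ⊗ c̃₍₂₎^β`. -/
theorem statement9 {k A C A' C' M : Type} [Field k] [Ring A] [Algebra k A]
    [AddCommGroup C] [Module k C] [Coalgebra k C]
    [Ring A'] [Algebra k A'] [AddCommGroup C'] [Module k C'] [Coalgebra k C']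
    [AddCommGroup M] [Module k M]
    {E : Entwining k A C} {E' : Entwining k A' C'}
    (m : Measuring k A C A' C' E E') (ν : RAct k A M) :
    ∃ (β : RAct k A' (M ⊗[k] C')) (ρ : RComod k C' (M ⊗[k] C')),
      β.act = measAct m ν.act ∧ ρ.ρ = coactMC k C' M ∧ EntwCompat E' β ρ := by
  rw [measAct_eq_twistAct]
  exact ⟨⟨_, twistAct_tmul_one _ (measTwist_tmul_one m.α E' m.meas_unit) ν,
      twistAct_twistAct _ (measTwist_mul m) ν⟩,
    ⟨coactMC k C' M, coactMC_coassoc, coactMC_counit⟩, rfl, rfl,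
    coactMC_comp_twistAct _ (measTwist_comul m.α E') ν.act⟩
end

section
/- Let (A,C)_ψ be an entwining structure. The functor M_A → M_A^C(ψ) sending a right A-module M to M⊗C (with action (m⊗c)·a = m·ψ(c⊗a) and coaction M⊗Δ) is right adjoint to the forgetful functor M_A^C(ψ) → M_A. Concretely, for every M ∈ M_A and N ∈ M_A^C(ψ) there is a bijection, natural in M and N, between right A-module maps N → M and morphisms N → M⊗C in M_A^C(ψ) (right A-linear right C-colinear maps), given by f ↦ (f⊗C)∘Δ_N with inverse g ↦ (M⊗ε)∘g. -/
open TensorProduct LinearMap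

variable {k A C M : Type} [Field k] [Ring A] [Algebra k A]
  [AddCommGroup C] [Module k C] [Coalgebra k C] [AddCommGroup M] [Module k M]

/-! `M ↦ M ⊗ C` is the cofree-comodule construction: `(M ⊗ ε) ∘ (f ⊗ C) ∘ Δ_N = f` is the
counit law of `N`, and `((M ⊗ ε) ∘ g ⊗ C) ∘ Δ_N = (M ⊗ ε ⊗ C) ∘ (M ⊗ Δ) ∘ g = g` uses the
colinearity of `g` and the counit law of `C`. The entwining enters only
in showing that `(f ⊗ C) ∘ Δ_N` is `A`-linear: the compatibility of `N` rewrites `Δ_N ∘ ν_N`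
as the entwined action of `N ⊗ C` after `Δ_N ⊗ A`, and the entwined action is natural
with respect to `A`-linear maps `f`. -/

section EntwinedModules

variable {N : Type} [AddCommGroup N] [Module k N]

lemma entwCompat_iff (E : Entwining k A C) (α : RAct k A M) (ρ : RComod k C M) :
    EntwCompat E α ρ ↔ ρ.ρ ∘ₗ α.act = entwAct E α.act ∘ₗ ρ.ρ.rTensor A :=
  Iff.rfl

lemma rTensor_comp_entwAct (E : Entwining k A C) {νN : N ⊗[k] A →ₗ[k] N}
    {νM : M ⊗[k] A →ₗ[k] M} {f : N →ₗ[k] M} (hf : f ∘ₗ νN = νM ∘ₗ f.rTensor A) :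
    f.rTensor C ∘ₗ entwAct E νN = entwAct E νM ∘ₗ (f.rTensor C).rTensor A := by
  refine TensorProduct.ext_threefold fun n c a => ?_
  simp only [entwAct, comp_apply, LinearEquiv.coe_coe, assoc_tmul, rTensor_tmul, lTensor_tmul]
  induction E.ψ (c ⊗ₜ a) using TensorProduct.induction_on with
  | zero => simp
  | tmul a' c' => simp [← comp_apply (g := νN), hf]
  | add x y hx hy => simp only [tmul_add, map_add, hx, hy]

lemma coactMC_comp_rTensor (f : N →ₗ[k] M) :
    coactMC k C M ∘ₗ f.rTensor C = (f.rTensor C).rTensor C ∘ₗ coactMC k C N := by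
  refine TensorProduct.ext' fun n c => ?_
  simp only [coactMC, comp_apply, LinearEquiv.coe_coe, rTensor_tmul, lTensor_tmul]
  induction Coalgebra.comul (R := k) c using TensorProduct.induction_on with
  | zero => simp
  | tmul c₁ c₂ => simp
  | add x y hx hy => simp only [tmul_add, map_add, hx, hy]

lemma RComod.coactMC_comp_ρ (ρ : RComod k C N) :
    coactMC k C N ∘ₗ ρ.ρ = ρ.ρ.rTensor C ∘ₗ ρ.ρ := by
  rw [coactMC, comp_assoc, ρ.coassoc, ← comp_assoc, ← LinearEquiv.coe_trans,
    LinearEquiv.self_trans_symm, LinearEquiv.refl_toLinearMap, id_comp]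

lemma rid_comp_lTensor_counit_comp_rTensor (f : N →ₗ[k] M) :
    ((TensorProduct.rid k M).toLinearMap ∘ₗ (Coalgebra.counit (R := k) (A := C)).lTensor M) ∘ₗ
      f.rTensor C =
    f ∘ₗ (TensorProduct.rid k N).toLinearMap ∘ₗ (Coalgebra.counit (R := k) (A := C)).lTensor N := by
  refine TensorProduct.ext' fun n c => ?_
  simp

lemma rTensor_counit_comp_coactMC :
    ((TensorProduct.rid k M).toLinearMap ∘ₗ
        (Coalgebra.counit (R := k) (A := C)).lTensor M).rTensor C ∘ₗ coactMC k C M =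
      LinearMap.id := by
  refine TensorProduct.ext' fun m c => ?_
  have key : ∀ x : C ⊗[k] C,
      ((TensorProduct.rid k M).toLinearMap ∘ₗ
        (Coalgebra.counit (R := k) (A := C)).lTensor M).rTensor C
        ((TensorProduct.assoc k M C C).symm (m ⊗ₜ x)) =
      m ⊗ₜ TensorProduct.lid k C ((Coalgebra.counit (R := k) (A := C)).rTensor C x) := by
    intro x
    induction x using TensorProduct.induction_on with
    | zero => simp
    | tmul c₁ c₂ => simp [TensorProduct.smul_tmul]
    | add x y hx hy => simp only [tmul_add, map_add, hx, hy]
  simp [coactMC, key, Coalgebra.rTensor_counit_comul]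

end EntwinedModules

theorem statement12_general {k A C M M' N N' : Type} [Field k] [Ring A] [Algebra k A]
    [AddCommGroup C] [Module k C] [Coalgebra k C]
    [AddCommGroup M] [Module k M] [AddCommGroup M'] [Module k M']
    [AddCommGroup N] [Module k N] [AddCommGroup N'] [Module k N']
    (E : Entwining k A C)
    (νM : RAct k A M) (νM' : RAct k A M')
    (νN : RAct k A N) (ρN : RComod k C N) (hN : EntwCompat E νN ρN)
    (νN' : RAct k A N') (ρN' : RComod k C N') :
    let Ξ : (N →ₗ[k] M) → (N →ₗ[k] M ⊗[k] C) := fun f => f.rTensor C ∘ₗ ρN.ρ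
    let Λ : (N →ₗ[k] M ⊗[k] C) → (N →ₗ[k] M) := fun g =>
      (TensorProduct.rid k M).toLinearMap ∘ₗ
        (Coalgebra.counit (R := k) (A := C)).lTensor M ∘ₗ g
    -- `Ξ f` is a morphism in `M_A^C(ψ)` whenever `f` is right `A`-linear:
    (∀ f : N →ₗ[k] M, f ∘ₗ νN.act = νM.act ∘ₗ f.rTensor A →
      ((Ξ f) ∘ₗ νN.act = entwAct E νM.act ∘ₗ (Ξ f).rTensor A ∧
       coactMC k C M ∘ₗ (Ξ f) = (Ξ f).rTensor C ∘ₗ ρN.ρ)) ∧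
    -- the two assignments are mutually inverse:
    (∀ f : N →ₗ[k] M, f ∘ₗ νN.act = νM.act ∘ₗ f.rTensor A → Λ (Ξ f) = f) ∧
    (∀ g : N →ₗ[k] M ⊗[k] C,
      g ∘ₗ νN.act = entwAct E νM.act ∘ₗ g.rTensor A →
      coactMC k C M ∘ₗ g = g.rTensor C ∘ₗ ρN.ρ →
      Ξ (Λ g) = g) ∧
    -- naturality in `M`:
    (∀ (u : M →ₗ[k] M'), u ∘ₗ νM.act = νM'.act ∘ₗ u.rTensor A →
      ∀ f : N →ₗ[k] M, (u ∘ₗ f).rTensor C ∘ₗ ρN.ρ = u.rTensor C ∘ₗ Ξ f) ∧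
    -- naturality in `N`:
    (∀ (v : N' →ₗ[k] N), v ∘ₗ νN'.act = νN.act ∘ₗ v.rTensor A →
      ρN.ρ ∘ₗ v = v.rTensor C ∘ₗ ρN'.ρ →
      ∀ f : N →ₗ[k] M, (f ∘ₗ v).rTensor C ∘ₗ ρN'.ρ = Ξ f ∘ₗ v) := by
  intro Ξ Λ
  refine ⟨fun f hf => ⟨?_, ?_⟩, fun f _ => ?_, fun g _ hg => ?_, fun u _ f => ?_,
    fun v _ hv f => ?_⟩
  · calc f.rTensor C ∘ₗ ρN.ρ ∘ₗ νN.act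
        = (f.rTensor C ∘ₗ entwAct E νN.act) ∘ₗ ρN.ρ.rTensor A := by
          rw [(entwCompat_iff E νN ρN).1 hN, comp_assoc]
      _ = entwAct E νM.act ∘ₗ (Ξ f).rTensor A := by
          rw [rTensor_comp_entwAct E hf, comp_assoc, ← rTensor_comp]
  · rw [← comp_assoc, coactMC_comp_rTensor, comp_assoc, ρN.coactMC_comp_ρ, ← comp_assoc,
      ← rTensor_comp]
  · simp only [Λ, Ξ, ← comp_assoc]
    rw [rid_comp_lTensor_counit_comp_rTensor, comp_assoc, comp_assoc, ρN.counit_id, comp_id]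
  · simp only [Ξ, Λ, ← comp_assoc]
    rw [rTensor_comp, comp_assoc, ← hg, ← comp_assoc, rTensor_counit_comp_coactMC, id_comp]
  · rw [rTensor_comp, comp_assoc]
  · rw [rTensor_comp, comp_assoc, ← hv, ← comp_assoc]

/-- for an entwining structure `(A,C)_ψ`, the functor `M ↦ M ⊗ C` from
right `A`-modules to entwined modules is right adjoint to the forgetful functor:
`f ↦ (f ⊗ C)∘Δ_N` is a bijection (natural in both arguments) from right `A`-linear
maps `N → M` to morphisms `N → M ⊗ C` of entwined modules, with inverse
`g ↦ (M ⊗ ε)∘g`. -/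
theorem statement12 {k A C M M' N N' : Type} [Field k] [Ring A] [Algebra k A]
    [AddCommGroup C] [Module k C] [Coalgebra k C]
    [AddCommGroup M] [Module k M] [AddCommGroup M'] [Module k M']
    [AddCommGroup N] [Module k N] [AddCommGroup N'] [Module k N']
    (E : Entwining k A C)
    (νM : RAct k A M) (νM' : RAct k A M')
    (νN : RAct k A N) (ρN : RComod k C N) (hN : EntwCompat E νN ρN)
    (νN' : RAct k A N') (ρN' : RComod k C N') (hN' : EntwCompat E νN' ρN') :
    let Ξ : (N →ₗ[k] M) → (N →ₗ[k] M ⊗[k] C) := fun f => f.rTensor C ∘ₗ ρN.ρ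
    let Λ : (N →ₗ[k] M ⊗[k] C) → (N →ₗ[k] M) := fun g =>
      (TensorProduct.rid k M).toLinearMap ∘ₗ
        (Coalgebra.counit (R := k) (A := C)).lTensor M ∘ₗ g
    -- `Ξ f` is a morphism in `M_A^C(ψ)` whenever `f` is right `A`-linear:
    (∀ f : N →ₗ[k] M, f ∘ₗ νN.act = νM.act ∘ₗ f.rTensor A →
      ((Ξ f) ∘ₗ νN.act = entwAct E νM.act ∘ₗ (Ξ f).rTensor A ∧
       coactMC k C M ∘ₗ (Ξ f) = (Ξ f).rTensor C ∘ₗ ρN.ρ)) ∧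
    -- the two assignments are mutually inverse:
    (∀ f : N →ₗ[k] M, f ∘ₗ νN.act = νM.act ∘ₗ f.rTensor A → Λ (Ξ f) = f) ∧
    (∀ g : N →ₗ[k] M ⊗[k] C,
      g ∘ₗ νN.act = entwAct E νM.act ∘ₗ g.rTensor A →
      coactMC k C M ∘ₗ g = g.rTensor C ∘ₗ ρN.ρ →
      Ξ (Λ g) = g) ∧
    -- naturality in `M`:
    (∀ (u : M →ₗ[k] M'), u ∘ₗ νM.act = νM'.act ∘ₗ u.rTensor A →
      ∀ f : N →ₗ[k] M, (u ∘ₗ f).rTensor C ∘ₗ ρN.ρ = u.rTensor C ∘ₗ Ξ f) ∧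
    -- naturality in `N`:
    (∀ (v : N' →ₗ[k] N), v ∘ₗ νN'.act = νN.act ∘ₗ v.rTensor A →
      ρN.ρ ∘ₗ v = v.rTensor C ∘ₗ ρN'.ρ →
      ∀ f : N →ₗ[k] M, (f ∘ₗ v).rTensor C ∘ₗ ρN'.ρ = Ξ f ∘ₗ v) :=
  statement12_general E νM νM' νN ρN hN νN' ρN'
end
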